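/- arXiv:1406.3654 — 6 statements merged into one kernel-verified Lean document; each statement's English description precedes it below -/
import Mathlib

section
/- Let V ⊆ W be valued K-vector spaces with Γ(V)=Γ(W)=Γ(K). If a ∈ W \ V is such that val(a) ≥ val(a+v) for all v ∈ V (i.e., a is maximally close to 0 in its coset a+V), then the line K·a is perpendicular to V: for all v ∈ V and α ∈ K, val(v + α·a) = min(val(v), val(α·a)). -/
/-! If `val v ≠ val b`, then `val (v + b) = min (val v) (val b)` in any ultrametric group; if
`val v = val b`, the ultrametric inequality gives `≥` and maximality of `b` in its coset `b + V`
gives `≤`. Maximality of `a` passes to `α • a` for `α ≠ 0`, because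
`α • a + v = α • (a + α⁻¹ • v)` and multiplying by `α` shifts every valuation by `val α`. -/

section MultiplicativeMap

variable {R Γ : Type*} [AddCommGroup Γ] [LinearOrder Γ] [IsOrderedAddMonoid Γ]
  {val : R → WithTop Γ}

lemma map_one_eq_zero_of_map_mul [MulOneClass R] (hmul : ∀ x y, val (x * y) = val x + val y)
    (h1 : val 1 ≠ ⊤) : val 1 = 0 := by
  have h := hmul 1 1
  rw [one_mul] at h
  lift val 1 to Γ using h1 with g
  have hg : g = g + g := by exact_mod_cast h
  exact_mod_cast left_eq_add.mp hg

lemma map_neg_one_eq_zero_of_map_mul [Ring R] (hmul : ∀ x y, val (x * y) = val x + val y)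
    (h1 : val 1 ≠ ⊤) : val (-1) = 0 := by
  have h := hmul (-1) (-1)
  rw [neg_mul_neg, one_mul, map_one_eq_zero_of_map_mul hmul h1] at h
  have hne : val (-1) ≠ ⊤ := fun htop => by simp [htop] at h
  lift val (-1) to Γ using hne with g
  have hg : 2 • g = 0 := by rw [two_nsmul]; exact_mod_cast h.symm
  exact_mod_cast two_nsmul_eq_zero.mp hg

end MultiplicativeMap

section UltrametricGroup

variable {W Γ : Type*} [LinearOrder Γ] [AddCommGroup W] {valW : W → WithTop Γ}

lemma val_add_eq_left_of_lt (hultra : ∀ v w : W, min (valW v) (valW w) ≤ valW (v + w))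
    (hneg : ∀ w : W, valW (-w) = valW w) {v w : W} (h : valW v < valW w) :
    valW (v + w) = valW v := by
  refine le_antisymm ?_ (min_eq_left h.le ▸ hultra v w)
  have hv := hultra (v + w) (-w)
  rw [hneg, add_neg_cancel_right] at hv
  exact (min_le_iff.mp hv).resolve_right h.not_ge

lemma val_add_eq_min_of_val_add_le_right
    (hultra : ∀ v w : W, min (valW v) (valW w) ≤ valW (v + w))
    (hneg : ∀ w : W, valW (-w) = valW w) {v b : W} (hle : valW (v + b) ≤ valW b) :
    valW (v + b) = min (valW v) (valW b) := by
  rcases lt_trichotomy (valW v) (valW b) with hlt | heq | hgt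
  · rw [val_add_eq_left_of_lt hultra hneg hlt, min_eq_left hlt.le]
  · exact le_antisymm (by rwa [heq, min_self]) (hultra v b)
  · rw [add_comm, val_add_eq_left_of_lt hultra hneg hgt, min_eq_right hgt.le]

end UltrametricGroup

section ValuedModule

variable {K W Γ : Type*} [AddCommGroup W] {valK : K → WithTop Γ} {valW : W → WithTop Γ}

lemma val_neg_of_val_smul [AddZeroClass Γ] [Ring K] [Module K W]
    (hsmul : ∀ (α : K) (w : W), valW (α • w) = valK α + valW w) (hK : valK (-1) = 0) (w : W) :
    valW (-w) = valW w := by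
  rw [← neg_one_smul K w, hsmul, hK, zero_add]

lemma val_smul_add_le_val_smul [AddCommMonoid Γ] [LinearOrder Γ] [IsOrderedAddMonoid Γ]
    [DivisionRing K] [Module K W]
    (hsmul : ∀ (α : K) (w : W), valW (α • w) = valK α + valW w) {V : Submodule K W} {a : W}
    (hmax : ∀ v ∈ V, valW (a + v) ≤ valW a) {α : K} (hα : α ≠ 0) :
    ∀ v ∈ V, valW (α • a + v) ≤ valW (α • a) := by
  intro v hv
  rw [← smul_inv_smul₀ hα v, ← smul_add, hsmul, hsmul]
  gcongr
  exact hmax _ (V.smul_mem _ hv)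

end ValuedModule

theorem stmt1_general {K W Γ : Type*} [Field K] [AddCommGroup W] [Module K W]
    [AddCommGroup Γ] [LinearOrder Γ] [IsOrderedAddMonoid Γ]
    (valK : K → WithTop Γ)
    (hvalK0 : ∀ x : K, valK x = ⊤ ↔ x = 0)
    (hvalKmul : ∀ x y : K, valK (x * y) = valK x + valK y)
    (valW : W → WithTop Γ)
    (hvalW0 : ∀ w : W, valW w = ⊤ ↔ w = 0)
    (hultra : ∀ v w : W, min (valW v) (valW w) ≤ valW (v + w))
    (hsmul : ∀ (α : K) (w : W), valW (α • w) = valK α + valW w)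
    (V : Submodule K W) (a : W)
    (hmax : ∀ v ∈ V, valW (a + v) ≤ valW a) :
    ∀ v ∈ V, ∀ α : K, valW (v + α • a) = min (valW v) (valW (α • a)) := by
  have hneg : ∀ w : W, valW (-w) = valW w :=
    val_neg_of_val_smul hsmul
      (map_neg_one_eq_zero_of_map_mul hvalKmul ((hvalK0 1).not.mpr one_ne_zero))
  intro v hv α
  rcases eq_or_ne α 0 with rfl | hα
  · simp [(hvalW0 0).mpr rfl]
  · refine val_add_eq_min_of_val_add_le_right hultra hneg ?_
    rw [add_comm]
    exact val_smul_add_le_val_smul hsmul hmax hα v hv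

theorem stmt1 {K W Γ : Type*} [Field K] [AddCommGroup W] [Module K W]
    [AddCommGroup Γ] [LinearOrder Γ] [IsOrderedAddMonoid Γ]
    (valK : K → WithTop Γ)
    (hvalK0 : ∀ x : K, valK x = ⊤ ↔ x = 0)
    (hvalKmul : ∀ x y : K, valK (x * y) = valK x + valK y)
    (hvalKultra : ∀ x y : K, min (valK x) (valK y) ≤ valK (x + y))
    (valW : W → WithTop Γ)
    (hvalW0 : ∀ w : W, valW w = ⊤ ↔ w = 0)
    (hultra : ∀ v w : W, min (valW v) (valW w) ≤ valW (v + w))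
    (hsmul : ∀ (α : K) (w : W), valW (α • w) = valK α + valW w)
    (V : Submodule K W) (a : W) (ha : a ∉ V)
    (hmax : ∀ v ∈ V, valW (a + v) ≤ valW a) :
    ∀ v ∈ V, ∀ α : K, valW (v + α • a) = min (valW v) (valW (α • a)) :=
  stmt1_general valK hvalK0 hvalKmul valW hvalW0 hultra hsmul V a hmax
end

section
/- Let K be a spherically complete valued field and V an n-dimensional valued K-vector space with Γ(V) = Γ(K). Then V admits a separating basis: there exist v₁,…,vₙ ∈ V forming a K-basis such that val(x₁v₁ + ⋯ + xₙvₙ) = min₁≤i≤n val(xᵢ) for every (x₁,…,xₙ) ∈ Kⁿ. In other words, V is isomorphic as a valued vector space to K^{⊕n} with the minimum valuation. -/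
/-!
Induction on the dimension. Let `u` be a separating family spanning `W` and `x` a vector. As `a`
runs over the coefficient vectors, the distances `val (x - ∑ aᵢ uᵢ)` are radii of balls
`{t : val (x - ∑ aᵢ uᵢ) ≤ val (t - aᵢ)}` in `K` which, for each coordinate `i`, form a chain; by
spherical completeness each chain has a common point, and these coordinates give a best
approximation `w ∈ W` of `x`. Then `x - w` is orthogonal to `W`, i.e.
`val (x - w + z) = min (val (x - w)) (val z)` for `z ∈ W`, and since `Γ(V) = Γ(K)` it can be
rescaled to valuation `0`; appending it to `u` keeps the family separating.
-/

def IsValBall {A Γ : Type*} [AddCommGroup A] [AddCommGroup Γ] [LinearOrder Γ] [IsOrderedAddMonoid Γ]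
    (val : A → WithTop Γ) (B : Set A) : Prop :=
  ∃ (a : A) (γ : Γ), B = {x | (γ : WithTop Γ) ≤ val (x - a)} ∨
    B = {x | (γ : WithTop Γ) < val (x - a)}

def SphericallyComplete {A Γ : Type*} [AddCommGroup A] [AddCommGroup Γ] [LinearOrder Γ] [IsOrderedAddMonoid Γ]
    (val : A → WithTop Γ) : Prop :=
  ∀ 𝒞 : Set (Set A), (∀ B ∈ 𝒞, IsValBall val B) → IsChain (· ⊆ ·) 𝒞 →
    𝒞.Nonempty → (∀ B ∈ 𝒞, B.Nonempty) → (⋂₀ 𝒞).Nonempty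

open Submodule Set Finset

section ValuedModule

variable {R K V Γ : Type*} [AddCommGroup Γ] [LinearOrder Γ] [IsOrderedAddMonoid Γ]

structure IsValuedModule [Ring R] [AddCommGroup V] [Module R V] (v : AddValuation R (WithTop Γ))
    (valV : V → WithTop Γ) : Prop where
  map_eq_top_iff : ∀ x, valV x = ⊤ ↔ x = 0
  map_add : ∀ x y, min (valV x) (valV y) ≤ valV (x + y)
  map_smul : ∀ (a : R) x, valV (a • x) = v a + valV x

def ValOrthogonal [Ring R] [AddCommGroup V] [Module R V] (valV : V → WithTop Γ) (x : V)
    (W : Submodule R V) : Prop :=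
  ∀ z ∈ W, valV (x + z) = min (valV x) (valV z)

def IsSeparatingFamily [Ring R] [AddCommGroup V] [Module R V] (v : AddValuation R (WithTop Γ))
    (valV : V → WithTop Γ) {ι : Type*} [Fintype ι] (u : ι → V) : Prop :=
  ∀ x : ι → R, valV (∑ i, x i • u i) = univ.inf fun i => v (x i)

section Ring

variable [Ring R] [AddCommGroup V] [Module R V] {v : AddValuation R (WithTop Γ)}
  {valV : V → WithTop Γ}

theorem SphericallyComplete.exists_forall_le_map_sub (hv : SphericallyComplete v) {ι : Type*}
    [Nonempty ι] (a : ι → R) (r : ι → WithTop Γ) (hr : ∀ i j, r i ≤ r j → r i ≤ v (a j - a i)) :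
    ∃ t, ∀ i, r i ≤ v (t - a i) := by
  by_cases htop : ∃ i, r i = ⊤
  · obtain ⟨i, hi⟩ := htop
    -- the ball of radius `⊤` around `a i` is `{a i}`, and it lies in every other ball
    exact ⟨a i, fun j => hr j i (hi ▸ le_top)⟩
  push Not at htop
  lift r to ι → Γ using htop
  let B : ι → Set R := fun i => {t | (r i : WithTop Γ) ≤ v (t - a i)}
  have hB : ∀ i j, r i ≤ r j → B j ⊆ B i := fun i j hij t ht =>
    calc (r i : WithTop Γ) ≤ min (v (t - a j)) (v (a j - a i)) :=
          le_min ((WithTop.coe_le_coe.2 hij).trans ht) (hr i j (WithTop.coe_le_coe.2 hij))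
      _ ≤ v (t - a i) := by simpa using v.map_add (t - a j) (a j - a i)
  have hchain : IsChain (· ⊆ ·) (range B) := by
    rintro _ ⟨i, rfl⟩ _ ⟨j, rfl⟩ -
    exact (le_total (r j) (r i)).imp (hB j i) (hB i j)
  obtain ⟨t, ht⟩ := hv (range B) (by rintro _ ⟨i, rfl⟩; exact ⟨a i, r i, Or.inl rfl⟩) hchain
    (range_nonempty B) (by rintro _ ⟨i, rfl⟩; exact ⟨a i, by simp [B]⟩)
  exact ⟨t, fun i => ht _ ⟨i, rfl⟩⟩

namespace IsValuedModule

variable (hV : IsValuedModule v valV)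
include hV

theorem map_zero : valV 0 = ⊤ := (hV.map_eq_top_iff 0).2 rfl

theorem map_neg (x : V) : valV (-x) = valV x := by
  rw [← neg_one_smul R x, hV.map_smul, v.map_neg, v.map_one, zero_add]

theorem map_sub (x y : V) : min (valV x) (valV y) ≤ valV (x - y) := by
  simpa only [sub_eq_add_neg, hV.map_neg] using hV.map_add x (-y)

theorem map_add_eq_of_lt {x y : V} (h : valV y < valV x) : valV (x + y) = valV y := by
  refine le_antisymm ?_ ((le_min h.le le_rfl).trans (hV.map_add x y))
  by_contra! hlt
  have := hV.map_sub (x + y) x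
  rw [add_sub_cancel_left] at this
  exact (lt_min hlt h).not_ge this

theorem exists_map_smul_eq_zero (hsurj : ∀ γ : Γ, ∃ a : R, v a = γ) {x : V} (hx : x ≠ 0) :
    ∃ a : R, valV (a • x) = 0 := by
  obtain ⟨γ, hγ⟩ := WithTop.ne_top_iff_exists.1 ((hV.map_eq_top_iff x).not.2 hx)
  obtain ⟨a, ha⟩ := hsurj (-γ)
  exact ⟨a, by rw [hV.map_smul, ha, ← hγ, ← WithTop.coe_add, neg_add_cancel, WithTop.coe_zero]⟩

theorem valOrthogonal_of_forall_le {x : V} {W : Submodule R V}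
    (h : ∀ z ∈ W, valV (x + z) ≤ valV x) : ValOrthogonal valV x W := by
  intro z hz
  rcases le_or_gt (valV x) (valV z) with hxz | hzx
  · rw [min_eq_left hxz]
    exact (h z hz).antisymm ((le_min le_rfl hxz).trans (hV.map_add x z))
  · rw [min_eq_right hzx.le]
    exact hV.map_add_eq_of_lt hzx

end IsValuedModule

theorem IsSeparatingFamily.exists_forall_map_sub_le (hv : SphericallyComplete v)
    (hV : IsValuedModule v valV) {ι : Type*} [Fintype ι] {u : ι → V}
    (hu : IsSeparatingFamily v valV u) (x : V) :
    ∃ w ∈ span R (range u), ∀ z ∈ span R (range u), valV (x - z) ≤ valV (x - w) := by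
  let s : (ι → R) → V := fun a => ∑ i, a i • u i
  have hs : ∀ a b, valV (s b - s a) = univ.inf fun i => v (b i - a i) := fun a b => by
    rw [← hu]
    simp only [s, sub_smul, Finset.sum_sub_distrib]
  have hcentre : ∀ i, ∃ t : R, ∀ a, valV (x - s a) ≤ v (t - a i) := fun i =>
    hv.exists_forall_le_map_sub (fun a => a i) (fun a => valV (x - s a)) fun a b hab =>
      calc valV (x - s a) ≤ valV (s b - s a) := by
            simpa [min_eq_left hab] using hV.map_sub (x - s a) (x - s b)
        _ ≤ v (b i - a i) := by rw [hs]; exact Finset.inf_le (mem_univ i)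
  choose t ht using hcentre
  refine ⟨s t, (mem_span_range_iff_exists_fun R).2 ⟨t, rfl⟩, fun z hz => ?_⟩
  obtain ⟨a, rfl⟩ := (mem_span_range_iff_exists_fun R).1 hz
  calc valV (x - s a) ≤ min (valV (x - s a)) (valV (s t - s a)) :=
        le_min le_rfl (by rw [hs]; exact Finset.le_inf fun i _ => ht i a)
    _ ≤ valV (x - s t) := by simpa using hV.map_sub (x - s a) (s t - s a)

end Ring

section Field

variable [Field K] [AddCommGroup V] [Module K V] {v : AddValuation K (WithTop Γ)}
  {valV : V → WithTop Γ}

theorem ValOrthogonal.smul (hV : IsValuedModule v valV) {x : V} {W : Submodule K V}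
    (h : ValOrthogonal valV x W) (a : K) : ValOrthogonal valV (a • x) W := by
  intro z hz
  rcases eq_or_ne a 0 with rfl | ha
  · simp [hV.map_zero]
  calc valV (a • x + z) = valV (a • (x + a⁻¹ • z)) := by rw [smul_add, smul_inv_smul₀ ha]
    _ = v a + min (valV x) (v a⁻¹ + valV z) := by
      rw [hV.map_smul, h _ (W.smul_mem _ hz), hV.map_smul]
    _ = min (valV (a • x)) (valV z) := by
      rw [← min_add_add_left, ← add_assoc, ← v.map_mul, mul_inv_cancel₀ ha, v.map_one, zero_add,
        hV.map_smul]

theorem IsSeparatingFamily.linearIndependent (hV : IsValuedModule v valV) {ι : Type*} [Fintype ι]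
    {u : ι → V} (hu : IsSeparatingFamily v valV u) : LinearIndependent K u := by
  rw [Fintype.linearIndependent_iff]
  intro x hx i
  have h := hu x
  rw [hx, hV.map_zero, eq_comm, Finset.inf_eq_top_iff] at h
  exact v.top_iff.1 (h i (mem_univ i))

theorem IsSeparatingFamily.snoc (hV : IsValuedModule v valV) {n : ℕ} {u : Fin n → V}
    (hu : IsSeparatingFamily v valV u) {e : V} (he : ValOrthogonal valV e (span K (range u)))
    (he0 : valV e = 0) : IsSeparatingFamily v valV (Fin.snoc u e : Fin (n + 1) → V) := by
  intro x
  have hz : ∑ i : Fin n, x i.castSucc • u i ∈ span K (range u) :=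
    sum_smul_mem _ _ fun i _ => subset_span (mem_range_self i)
  rw [Fin.sum_univ_castSucc]
  simp only [Fin.snoc_castSucc, Fin.snoc_last]
  rw [add_comm, he.smul hV _ _ hz, hV.map_smul, he0, add_zero, hu, Fin.univ_castSuccEmb,
    Finset.inf_cons, Finset.inf_map]
  rfl

theorem span_singleton_smul_sub_sup {a : K} (ha : a ≠ 0) {W : Submodule K V} {x w : V}
    (hw : w ∈ W) : K ∙ (a • (x - w)) ⊔ W = K ∙ x ⊔ W := by
  rw [span_singleton_smul_eq (IsUnit.mk0 a ha)]
  refine le_antisymm (sup_le ?_ le_sup_right) (sup_le ?_ le_sup_right) <;>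
    rw [span_singleton_le_iff_mem]
  · exact sub_mem (mem_sup_left (mem_span_singleton_self x)) (mem_sup_right hw)
  · simpa using add_mem (mem_sup_left (mem_span_singleton_self (x - w))) (mem_sup_right hw)

theorem exists_isSeparatingFamily_span_eq (hv : SphericallyComplete v)
    (hsurj : ∀ γ : Γ, ∃ a : K, v a = γ) (hV : IsValuedModule v valV) :
    ∀ {n : ℕ} {c : Fin n → V}, LinearIndependent K c →
      ∃ u : Fin n → V, IsSeparatingFamily v valV u ∧ span K (range u) = span K (range c)
  | 0, c, _ => ⟨c, fun x => by simp [hV.map_zero], rfl⟩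
  | n + 1, c, hc => by
    obtain ⟨c, x, rfl⟩ : ∃ c' x, c = Fin.snoc c' x :=
      ⟨Fin.init c, c (Fin.last n), (Fin.snoc_init_self c).symm⟩
    obtain ⟨hc, hx⟩ := linearIndependent_finSnoc.1 hc
    obtain ⟨u, hu, hspan⟩ := exists_isSeparatingFamily_span_eq hv hsurj hV hc
    obtain ⟨w, hw, hbest⟩ := hu.exists_forall_map_sub_le hv hV x
    have hxw : x - w ≠ 0 := fun h => hx (hspan ▸ sub_eq_zero.1 h ▸ hw)
    obtain ⟨a, ha⟩ := hV.exists_map_smul_eq_zero hsurj hxw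
    have ha0 : a ≠ 0 := by
      rintro rfl
      simp [hV.map_zero] at ha
    have horth : ValOrthogonal valV (x - w) (span K (range u)) :=
      hV.valOrthogonal_of_forall_le fun z hz => by
        rw [sub_add]
        exact hbest _ (sub_mem hw hz)
    refine ⟨Fin.snoc u (a • (x - w)), hu.snoc hV (horth.smul hV a) ha, ?_⟩
    rw [Fin.range_snoc, Fin.range_snoc, span_insert, span_insert, ← hspan,
      span_singleton_smul_sub_sup ha0 hw]

end Field

end ValuedModule

theorem stmt2 {K V Γ : Type*} [Field K] [AddCommGroup V] [Module K V]
    [AddCommGroup Γ] [LinearOrder Γ] [IsOrderedAddMonoid Γ] (n : ℕ)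
    (valK : K → WithTop Γ)
    (hvalK0 : ∀ x : K, valK x = ⊤ ↔ x = 0)
    (hvalKmul : ∀ x y : K, valK (x * y) = valK x + valK y)
    (hvalKultra : ∀ x y : K, min (valK x) (valK y) ≤ valK (x + y))
    (hvalKsurj : ∀ γ : Γ, ∃ x : K, valK x = γ)
    (hKsc : SphericallyComplete valK)
    (valV : V → WithTop Γ)
    (hvalV0 : ∀ v : V, valV v = ⊤ ↔ v = 0)
    (hultra : ∀ v w : V, min (valV v) (valV w) ≤ valV (v + w))
    (hsmul : ∀ (α : K) (v : V), valV (α • v) = valK α + valV v)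
    [FiniteDimensional K V] (hdim : Module.finrank K V = n) :
    ∃ v : Fin n → V, LinearIndependent K v ∧ Submodule.span K (Set.range v) = ⊤ ∧
      ∀ x : Fin n → K,
        valV (∑ i, x i • v i) = Finset.univ.inf (fun i => valK (x i)) := by
  have hone : valK 1 = 0 := by
    obtain ⟨γ, hγ⟩ := WithTop.ne_top_iff_exists.1 ((hvalK0 1).not.2 one_ne_zero)
    have h := hvalKmul 1 1
    rw [one_mul, ← hγ, ← WithTop.coe_add, WithTop.coe_eq_coe, left_eq_add] at h
    rw [← hγ, h, WithTop.coe_zero]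
  let v : AddValuation K (WithTop Γ) :=
    AddValuation.of valK ((hvalK0 0).2 rfl) hone hvalKultra hvalKmul
  have hV : IsValuedModule v valV := ⟨hvalV0, hultra, hsmul⟩
  let b := Module.finBasisOfFinrankEq K V hdim
  obtain ⟨u, hu, hspan⟩ :=
    exists_isSeparatingFamily_span_eq (v := v) hKsc hvalKsurj hV b.linearIndependent
  exact ⟨u, hu.linearIndependent hV, hspan.trans b.span_eq, hu⟩
end

section
/- Let K be a valued field with value group Γ, and let N ⊆ V be an 𝒪-submodule of a finite-dimensional K-vector space V such that the K-span of N is V, N contains no nonzero K-subspace, and for every nonzero v ∈ V the set {val(α) : α ∈ K^×, v ∈ αN} has a supremum in Γ (defining val_N(v) as this supremum). Then val_N makes V into a valued K-vector space: val_N(βv) = val(β) + val_N(v), val_N(v+w) ≥ min(val_N(v), val_N(w)), and moreover val_N(v) > 0 implies v ∈ N while val_N(v) < 0 implies v ∉ N. -/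
/- Look at the values `val α` of all scalings `v = α • w` with `w ∈ N`.  Rescaling `v` by `β`
translates this set by `val β`.  If `v = α • w₁` and `v' = α' • w₂` with `val α ≤ val α'`, then
`v + v' = α • (w₁ + (α⁻¹ α') • w₂)` with `α⁻¹ α'` integral, so `min (val α) (val α')` is a value
for `v + v'`.  Passing to suprema gives the scaling law and the ultrametric inequality.  A value
`> 0` puts `v` in `N`, and `v ∈ N` makes `0 = val 1` a value. -/

section ValuedField

variable {K Γ : Type*} [Field K] [AddCommGroup Γ] [LinearOrder Γ] [IsOrderedAddMonoid Γ]
  {valK : K → WithTop Γ}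

theorem val_one (hval0 : ∀ x : K, valK x = ⊤ ↔ x = 0)
    (hvalmul : ∀ x y : K, valK (x * y) = valK x + valK y) : valK 1 = 0 := by
  have hne : valK 1 ≠ ⊤ := fun h => one_ne_zero ((hval0 1).mp h)
  have h := hvalmul 1 1
  rw [one_mul] at h
  exact (add_left_inj_of_ne_top hne).mp (by rw [zero_add]; exact h.symm)

theorem val_inv (hval0 : ∀ x : K, valK x = ⊤ ↔ x = 0)
    (hvalmul : ∀ x y : K, valK (x * y) = valK x + valK y) {β : K} (hβ : β ≠ 0) :
    valK β⁻¹ = -valK β := by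
  have hne : valK β ≠ ⊤ := fun h => hβ ((hval0 β).mp h)
  have h : valK β⁻¹ + valK β = 0 := by
    rw [← hvalmul, inv_mul_cancel₀ hβ, val_one hval0 hvalmul]
  calc valK β⁻¹ = valK β⁻¹ + valK β + -valK β :=
        (LinearOrderedAddCommGroupWithTop.add_neg_cancel_right_of_ne_top hne _).symm
    _ = -valK β := by rw [h, zero_add]

end ValuedField

section ScalingValues

variable {K V Γ : Type*} [Field K] [AddCommGroup V] [Module K V] [AddCommGroup Γ]
  {valK : K → WithTop Γ} {N : Set V}

/-- `val_N v` is the supremum of `scalingValues valK N v`. -/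
def scalingValues (valK : K → WithTop Γ) (N : Set V) (v : V) : Set Γ :=
  {γ | ∃ α : K, valK α = γ ∧ ∃ w ∈ N, v = α • w}

theorem add_mem_scalingValues_smul (hvalmul : ∀ x y : K, valK (x * y) = valK x + valK y)
    {β : K} {b γ : Γ} {v : V} (hb : valK β = b) (hγ : γ ∈ scalingValues valK N v) :
    b + γ ∈ scalingValues valK N (β • v) := by
  obtain ⟨α, hα, w, hw, rfl⟩ := hγ
  exact ⟨β * α, by rw [hvalmul, hb, hα, WithTop.coe_add], w, hw, smul_smul β α w⟩

variable [LinearOrder Γ]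

theorem mem_of_isLUB_scalingValues_pos (hNsmul : ∀ α : K, 0 ≤ valK α → ∀ x ∈ N, α • x ∈ N)
    {v : V} {a : Γ} (hv : IsLUB (scalingValues valK N v) a) (ha : 0 < a) : v ∈ N := by
  obtain ⟨γ, ⟨α, hα, w, hw, rfl⟩, hγ⟩ := (lt_isLUB_iff hv).mp ha
  exact hNsmul α (hα ▸ WithTop.coe_nonneg.mpr hγ.le) w hw

variable [IsOrderedAddMonoid Γ]

theorem scalingValues_smul (hval0 : ∀ x : K, valK x = ⊤ ↔ x = 0)
    (hvalmul : ∀ x y : K, valK (x * y) = valK x + valK y) {β : K} {b : Γ} (hb : valK β = b)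
    (v : V) : scalingValues valK N (β • v) = (b + ·) '' scalingValues valK N v := by
  have hβ : β ≠ 0 := fun h => WithTop.coe_ne_top (hb ▸ (hval0 β).mpr h)
  have hβinv : valK β⁻¹ = ↑(-b) := by
    rw [val_inv hval0 hvalmul hβ, hb, WithTop.LinearOrderedAddCommGroup.coe_neg]
  ext γ
  constructor
  · intro hγ
    refine ⟨-b + γ, ?_, add_neg_cancel_left b γ⟩
    simpa only [inv_smul_smul₀ hβ] using add_mem_scalingValues_smul hvalmul hβinv hγ
  · rintro ⟨δ, hδ, rfl⟩
    exact add_mem_scalingValues_smul hvalmul hb hδ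

theorem IsLUB.scalingValues_smul (hval0 : ∀ x : K, valK x = ⊤ ↔ x = 0)
    (hvalmul : ∀ x y : K, valK (x * y) = valK x + valK y) {β : K} {b g : Γ} (hb : valK β = b)
    {v : V} (hv : IsLUB (scalingValues valK N v) g) :
    IsLUB (scalingValues valK N (β • v)) (b + g) := by
  rw [_root_.scalingValues_smul hval0 hvalmul hb]
  exact (OrderIso.addLeft b).isLUB_image'.mpr hv

theorem min_mem_scalingValues_add (hval0 : ∀ x : K, valK x = ⊤ ↔ x = 0)
    (hvalmul : ∀ x y : K, valK (x * y) = valK x + valK y)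
    (hNadd : ∀ x ∈ N, ∀ y ∈ N, x + y ∈ N)
    (hNsmul : ∀ α : K, 0 ≤ valK α → ∀ x ∈ N, α • x ∈ N) {v w : V} {γ₁ γ₂ : Γ}
    (hγ₁ : γ₁ ∈ scalingValues valK N v) (hγ₂ : γ₂ ∈ scalingValues valK N w) :
    min γ₁ γ₂ ∈ scalingValues valK N (v + w) := by
  wlog hle : γ₁ ≤ γ₂ generalizing v w γ₁ γ₂
  · rw [min_comm, add_comm]
    exact this hγ₂ hγ₁ (le_of_not_ge hle)
  obtain ⟨α, hα, w₁, hw₁, rfl⟩ := hγ₁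
  obtain ⟨α', hα', w₂, hw₂, rfl⟩ := hγ₂
  have hα0 : α ≠ 0 := fun h => WithTop.coe_ne_top (hα ▸ (hval0 α).mpr h)
  have hint : 0 ≤ valK (α⁻¹ * α') := by
    rw [hvalmul, val_inv hval0 hvalmul hα0, hα, hα', ← WithTop.LinearOrderedAddCommGroup.coe_neg,
      ← WithTop.coe_add, WithTop.coe_nonneg]
    exact le_neg_add_iff_le.mpr hle
  refine ⟨α, by rw [hα, min_eq_left hle], w₁ + (α⁻¹ * α') • w₂,
    hNadd _ hw₁ _ (hNsmul _ hint _ hw₂), ?_⟩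
  rw [smul_add, smul_smul, mul_inv_cancel_left₀ hα0]

theorem min_le_of_isLUB_scalingValues (hval0 : ∀ x : K, valK x = ⊤ ↔ x = 0)
    (hvalmul : ∀ x y : K, valK (x * y) = valK x + valK y)
    (hNadd : ∀ x ∈ N, ∀ y ∈ N, x + y ∈ N)
    (hNsmul : ∀ α : K, 0 ≤ valK α → ∀ x ∈ N, α • x ∈ N) {v w : V} {a b c : Γ}
    (hv : IsLUB (scalingValues valK N v) a) (hw : IsLUB (scalingValues valK N w) b)
    (hvw : IsLUB (scalingValues valK N (v + w)) c) : min a b ≤ c := by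
  by_contra! hlt
  obtain ⟨γ₁, hγ₁, hc₁⟩ := (lt_isLUB_iff hv).mp (hlt.trans_le (min_le_left a b))
  obtain ⟨γ₂, hγ₂, hc₂⟩ := (lt_isLUB_iff hw).mp (hlt.trans_le (min_le_right a b))
  exact (hvw.1 (min_mem_scalingValues_add hval0 hvalmul hNadd hNsmul hγ₁ hγ₂)).not_gt
    (lt_min hc₁ hc₂)

theorem nonneg_of_isLUB_scalingValues (hval0 : ∀ x : K, valK x = ⊤ ↔ x = 0)
    (hvalmul : ∀ x y : K, valK (x * y) = valK x + valK y) {v : V} {a : Γ}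
    (hv : IsLUB (scalingValues valK N v) a) (hmem : v ∈ N) : 0 ≤ a :=
  hv.1 ⟨1, by rw [val_one hval0 hvalmul, WithTop.coe_zero], v, hmem, (one_smul K v).symm⟩

end ScalingValues

theorem stmt6_general {K V Γ : Type*} [Field K] [AddCommGroup V] [Module K V]
    [AddCommGroup Γ] [LinearOrder Γ] [IsOrderedAddMonoid Γ]
    (valK : K → WithTop Γ)
    (hvalK0 : ∀ x : K, valK x = ⊤ ↔ x = 0)
    (hvalKmul : ∀ x y : K, valK (x * y) = valK x + valK y)
    (N : Set V)
    (hNadd : ∀ x ∈ N, ∀ y ∈ N, x + y ∈ N)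
    (hNsmul : ∀ α : K, 0 ≤ valK α → ∀ x ∈ N, α • x ∈ N)
    (valN : V → Γ)
    (hsup : ∀ v : V, v ≠ 0 →
      IsLUB {γ : Γ | ∃ α : K, valK α = (γ : WithTop Γ) ∧ ∃ w ∈ N, v = α • w}
        (valN v)) :
    (∀ (β : K) (v : V), β ≠ 0 → v ≠ 0 →
        (valN (β • v) : WithTop Γ) = valK β + (valN v : WithTop Γ)) ∧
    (∀ v w : V, v ≠ 0 → w ≠ 0 → v + w ≠ 0 →
        min (valN v) (valN w) ≤ valN (v + w)) ∧
    (∀ v : V, v ≠ 0 → 0 < valN v → v ∈ N) ∧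
    (∀ v : V, v ≠ 0 → valN v < 0 → v ∉ N) := by
  have hlub : ∀ v, v ≠ 0 → IsLUB (scalingValues valK N v) (valN v) := hsup
  refine ⟨fun β v hβ hv => ?_, fun v w hv hw hvw => ?_, fun v hv => ?_, fun v hv hneg hmem => ?_⟩
  · obtain ⟨b, hb⟩ := WithTop.ne_top_iff_exists.mp (mt (hvalK0 β).mp hβ)
    rw [← hb, ← WithTop.coe_add, WithTop.coe_inj]
    exact (hlub _ (smul_ne_zero hβ hv)).unique
      ((hlub v hv).scalingValues_smul hvalK0 hvalKmul hb.symm)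
  · exact min_le_of_isLUB_scalingValues hvalK0 hvalKmul hNadd hNsmul
      (hlub v hv) (hlub w hw) (hlub _ hvw)
  · exact mem_of_isLUB_scalingValues_pos hNsmul (hlub v hv)
  · exact hneg.not_ge (nonneg_of_isLUB_scalingValues hvalK0 hvalKmul (hlub v hv) hmem)

theorem stmt6 {K V Γ : Type*} [Field K] [AddCommGroup V] [Module K V]
    [AddCommGroup Γ] [LinearOrder Γ] [IsOrderedAddMonoid Γ] [FiniteDimensional K V]
    (valK : K → WithTop Γ)
    (hvalK0 : ∀ x : K, valK x = ⊤ ↔ x = 0)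
    (hvalKmul : ∀ x y : K, valK (x * y) = valK x + valK y)
    (hvalKultra : ∀ x y : K, min (valK x) (valK y) ≤ valK (x + y))
    (N : Set V)
    (hN0 : (0 : V) ∈ N)
    (hNadd : ∀ x ∈ N, ∀ y ∈ N, x + y ∈ N)
    (hNsmul : ∀ α : K, 0 ≤ valK α → ∀ x ∈ N, α • x ∈ N)
    (hspan : Submodule.span K N = ⊤)
    (hnosub : ∀ v : V, v ≠ 0 → ∃ α : K, α • v ∉ N)
    (valN : V → Γ)
    (hsup : ∀ v : V, v ≠ 0 →
      IsLUB {γ : Γ | ∃ α : K, valK α = (γ : WithTop Γ) ∧ ∃ w ∈ N, v = α • w}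
        (valN v)) :
    (∀ (β : K) (v : V), β ≠ 0 → v ≠ 0 →
        (valN (β • v) : WithTop Γ) = valK β + (valN v : WithTop Γ)) ∧
    (∀ v w : V, v ≠ 0 → w ≠ 0 → v + w ≠ 0 →
        min (valN v) (valN w) ≤ valN (v + w)) ∧
    (∀ v : V, v ≠ 0 → 0 < valN v → v ∈ N) ∧
    (∀ v : V, v ≠ 0 → valN v < 0 → v ∉ N) :=
  stmt6_general valK hvalK0 hvalKmul N hNadd hNsmul valN hsup
end

section
/- In any theory T, the following are equivalent for small sets A, B, C: (1) tp(A/BC) has a global C-definable extension; (2) for every small D there is a C-definable extension of tp(A/BC) to a type over BCD; (3) for every small D there is D' ≡_{BC} D with tp(A/BCD') C-definable; (4) for some small model M ⊇ BC, tp(A/M) is C-definable. -/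
/- STATEMENT 9: In the monster model of a complete theory, the following are
equivalent for small A, B, C: (1) tp(A/BC) has a global C-definable extension;
(2) for every small D there is a C-definable extension of tp(A/BC) to a type
over BCD (equivalently, a realization A' ≡_{BC} A with tp(A'/BCD) C-definable);
(3) for every small D there is D' ≡_{BC} D with tp(A/BCD') C-definable;
(4) for some small model M₀ ⊇ BC, tp(A/M₀) is C-definable.
The monster model is axiomatized by saturation, homogeneity and downward
Löwenheim–Skolem hypotheses relative to a cardinal κ bounding "small". -/

open FirstOrder Cardinal

universe u v w

/-- `tp(a/B)` is `C`-definable. -/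
def TpDef (L : FirstOrder.Language.{v, w}) {M : Type u} [L.Structure M] {ι : Type u}
    (a : ι → M) (B C : Set M) : Prop :=
  ∀ (m n : ℕ) (f : Fin m → ι) (φ : L.Formula (Fin m ⊕ Fin n)),
    ∃ (k : ℕ) (c : Fin k → M) (ψ : L.Formula (Fin k ⊕ Fin n)),
      (∀ i, c i ∈ C) ∧
      ∀ b : Fin n → M, (∀ i, b i ∈ B) →
        (φ.Realize (Sum.elim (a ∘ f) b) ↔ ψ.Realize (Sum.elim c b))

/-- Two tuples have the same type over `E`. -/
def EqTp (L : FirstOrder.Language.{v, w}) {M : Type u} [L.Structure M] {ι : Type u}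
    (x y : ι → M) (E : Set M) : Prop :=
  ∀ (m n : ℕ) (f : Fin m → ι) (φ : L.Formula (Fin m ⊕ Fin n)) (b : Fin n → M),
    (∀ i, b i ∈ E) →
    (φ.Realize (Sum.elim (x ∘ f) b) ↔ φ.Realize (Sum.elim (y ∘ f) b))

/-- A complete global type over the monster `M` in variables indexed by `ι`:
a maximal finitely satisfiable assignment of truth values to formulas with
parameters from `M`. -/
structure GlobalType (L : FirstOrder.Language.{v, w}) (M : Type u) [L.Structure M]
    (ι : Type u) where
  mem : ∀ (m n : ℕ), (Fin m → ι) → L.Formula (Fin m ⊕ Fin n) → (Fin n → M) → Prop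
  finSat : ∀ (N : ℕ) (m n : Fin N → ℕ) (f : ∀ j, Fin (m j) → ι)
      (φ : ∀ j, L.Formula (Fin (m j) ⊕ Fin (n j))) (b : ∀ j, Fin (n j) → M),
      (∀ j, mem _ _ (f j) (φ j) (b j)) →
      ∃ a : ι → M, ∀ j, (φ j).Realize (Sum.elim (a ∘ f j) (b j))
  maximal : ∀ m n f φ b, mem m n f φ.not b ↔ ¬ mem m n f φ b

/-- A global type is `C`-definable. -/
def GlobalType.CDefinable {L : FirstOrder.Language.{v, w}} {M : Type u} [L.Structure M]
    {ι : Type u} (p : GlobalType L M ι) (C : Set M) : Prop :=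
  ∀ (m n : ℕ) (f : Fin m → ι) (φ : L.Formula (Fin m ⊕ Fin n)),
    ∃ (k : ℕ) (c : Fin k → M) (ψ : L.Formula (Fin k ⊕ Fin n)),
      (∀ i, c i ∈ C) ∧
      ∀ b : Fin n → M, (p.mem m n f φ b ↔ ψ.Realize (Sum.elim c b))

/-- A global type extends `tp(a/B)`. -/
def GlobalType.ExtendsTp {L : FirstOrder.Language.{v, w}} {M : Type u} [L.Structure M]
    {ι : Type u} (p : GlobalType L M ι) (a : ι → M) (B : Set M) : Prop :=
  ∀ (m n : ℕ) (f : Fin m → ι) (φ : L.Formula (Fin m ⊕ Fin n)) (b : Fin n → M),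
    (∀ i, b i ∈ B) → φ.Realize (Sum.elim (a ∘ f) b) → p.mem m n f φ b

/-- The tuple `a` realizes the restriction `p|E`. -/
def GlobalType.RlzOn {L : FirstOrder.Language.{v, w}} {M : Type u} [L.Structure M]
    {ι : Type u} (p : GlobalType L M ι) (a : ι → M) (E : Set M) : Prop :=
  ∀ (m n : ℕ) (f : Fin m → ι) (φ : L.Formula (Fin m ⊕ Fin n)) (b : Fin n → M),
    (∀ i, b i ∈ E) → p.mem m n f φ b → φ.Realize (Sum.elim (a ∘ f) b)

/-- `A ⫝¹_C B` : `tp(A/BC)` has a global `C`-definable extension. -/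
def Indep1 (L : FirstOrder.Language.{v, w}) {M : Type u} [L.Structure M] {ι : Type u}
    (a : ι → M) (C B : Set M) : Prop :=
  ∃ p : GlobalType L M ι, p.CDefinable C ∧ p.ExtendsTp a (B ∪ C)

/-
(1 ⇒ 2) is saturation: realize the global type over `B ∪ C ∪ range d`. (2 ⇒ 3) is homogeneity:
moving `a'` to `a` over `B ∪ C` carries `d` to some `d' ≡_{BC} d`, and the `C`-definitions, whose
parameters lie in `B ∪ C`, are carried along. (3 ⇒ 4): applied to an enumeration `d` of a small
elementary substructure `S ⊇ B ∪ C`, (3) yields a conjugate `d'` whose range is again an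
elementary substructure. (4 ⇒ 1): the `C`-definitions of `tp(a/S)`, read in `M`, form a global
type: its consistency and completeness are, finitely many formulas at a time, first-order
statements about parameters in `C` which hold over `S` and hence, as `S ≼ M`, over `M`.
-/

namespace FirstOrder.Language

theorem ElementarilyEquivalent.mk_le_of_lt_aleph0 {L : Language} {M N : Type u} [L.Structure M]
    [L.Structure N] (h : N ≅[L] M) (hN : #N < ℵ₀) : #M ≤ #N := by
  obtain ⟨n, hn⟩ := Cardinal.lt_aleph0.1 hN
  by_contra! hlt
  have hM : M ⊨ Sentence.cardGe L (n + 1) := by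
    rw [Sentence.realize_cardGe, Nat.cast_succ, Cardinal.natCast_add_one_le_iff, ← hn]
    exact hlt
  have hN' := (Sentence.realize_cardGe L (n + 1)).1 ((h.realize_sentence _).2 hM)
  rw [hn, Nat.cast_le] at hN'
  omega

variable {L : Language} {M N : Type*} [L.Structure M] [L.Structure N]

namespace ElementarySubstructure

theorem mk_union_lt (S : L.ElementarySubstructure M) {κ : Cardinal} (hS : #S < κ)
    {X Y : Set M} (hX : #X < κ) (hY : #Y < κ) : #(X ∪ Y : Set M) < κ := by
  rcases lt_or_ge κ ℵ₀ with hκ | hκ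
  · -- a finite elementary substructure is all of `M`
    exact (mk_set_le _).trans_lt
      ((S.elementarilyEquivalent.mk_le_of_lt_aleph0 (hS.trans hκ)).trans_lt hS)
  · exact (mk_union_le X Y).trans_lt (add_lt_of_lt hκ hX hY)

theorem realize_of_forall_mem (S : L.ElementarySubstructure M) {β γ : Type*} [Finite γ]
    {χ : L.Formula (β ⊕ γ)} {v : β → M} (hv : ∀ i, v i ∈ S)
    (h : ∀ b : γ → M, (∀ i, b i ∈ S) → χ.Realize (Sum.elim v b)) (b : γ → M) :
    χ.Realize (Sum.elim v b) := by
  let v' : β → S := fun i => ⟨v i, hv i⟩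
  have hS : (χ.iAlls γ).Realize v' := by
    rw [Formula.realize_iAlls]
    intro b'
    rw [← S.subtype.map_formula]
    convert h (fun i => b' i) fun i => (b' i).2 using 2
    ext (i | i) <;> rfl
  have hM := (S.subtype.map_formula _ v').2 hS
  rw [Formula.realize_iAlls] at hM
  exact hM b

theorem exists_realize_of_forall_mem_imp (S : L.ElementarySubstructure M) {ι : Type*}
    {a : ι → M} {N : ℕ} {m n k : Fin N → ℕ} (f : ∀ j, Fin (m j) → ι)
    (φ : ∀ j, L.Formula (Fin (m j) ⊕ Fin (n j))) (c : ∀ j, Fin (k j) → M) (hc : ∀ j i, c j i ∈ S)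
    (ψ : ∀ j, L.Formula (Fin (k j) ⊕ Fin (n j)))
    (hψ : ∀ j (b : Fin (n j) → M), (∀ i, b i ∈ S) → (ψ j).Realize (Sum.elim (c j) b) →
      (φ j).Realize (Sum.elim (a ∘ f j) b))
    (b : ∀ j, Fin (n j) → M) (hb : ∀ j, (ψ j).Realize (Sum.elim (c j) (b j))) :
    ∃ a' : ι → M, ∀ j, (φ j).Realize (Sum.elim (a' ∘ f j) (b j)) := by
  let R := Set.range fun x : Σ j, Fin (m j) => f x.1 x.2
  let Ψ : L.Formula ((Σ j, Fin (k j)) ⊕ (Σ j, Fin (n j))) :=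
    Formula.iInf fun j => (ψ j).relabel (Sum.map (Sigma.mk j) (Sigma.mk j))
  let Φ : L.Formula (((Σ j, Fin (k j)) ⊕ (Σ j, Fin (n j))) ⊕ R) :=
    Formula.iInf fun j => (φ j).relabel
      (Sum.elim (fun i => Sum.inr ⟨f j i, ⟨j, i⟩, rfl⟩) fun i => Sum.inl (Sum.inr ⟨j, i⟩))
  have hΨ : ∀ v : (Σ j, Fin (n j)) → M, (Ψ.Realize (Sum.elim (fun x => c x.1 x.2) v) ↔
      ∀ j, (ψ j).Realize (Sum.elim (c j) fun i => v ⟨j, i⟩)) := fun v => by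
    simp only [Ψ, Formula.realize_iInf, Formula.realize_relabel]
    exact forall_congr' fun j => iff_of_eq (congrArg _ (by ext (i | i) <;> rfl))
  have hΦ : ∀ v (x : R → M), (Φ.Realize (Sum.elim (Sum.elim (fun x => c x.1 x.2) v) x) ↔
      ∀ j, (φ j).Realize (Sum.elim (fun i => x ⟨f j i, ⟨j, i⟩, rfl⟩) fun i => v ⟨j, i⟩)) :=
    fun v x => by
    simp only [Φ, Formula.realize_iInf, Formula.realize_relabel]
    exact forall_congr' fun j => iff_of_eq (congrArg _ (by ext (i | i) <;> rfl))
  -- `Ψ → ∃ R, Φ` only has parameters from `S`, and it holds for all `S`-tuples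
  have key := S.realize_of_forall_mem (χ := Ψ.imp (Φ.iExs R)) (v := fun x => c x.1 x.2)
    (fun x => hc _ _) ?_ (fun x => b x.1 x.2)
  · rw [Formula.realize_imp, Formula.realize_iExs, hΨ] at key
    obtain ⟨x, hx⟩ := key hb
    refine ⟨Function.extend Subtype.val x a, fun j => ?_⟩
    convert (hΦ _ x).1 hx j using 3 with i
    exact Subtype.val_injective.extend_apply x a ⟨f j i, ⟨j, i⟩, rfl⟩
  · intro b' hb'
    rw [Formula.realize_imp, Formula.realize_iExs, hΨ]
    exact fun h => ⟨fun x => a x, (hΦ _ _).2 fun j => hψ j _ (fun i => hb' _) (h j)⟩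

theorem realize_iff_not_of_forall_mem (S : L.ElementarySubstructure M) {α₁ α₂ γ : Type*}
    [Finite γ] {ψ₁ : L.Formula (α₁ ⊕ γ)} {ψ₂ : L.Formula (α₂ ⊕ γ)} {c₁ : α₁ → M} {c₂ : α₂ → M}
    (hc₁ : ∀ i, c₁ i ∈ S) (hc₂ : ∀ i, c₂ i ∈ S)
    (h : ∀ b : γ → M, (∀ i, b i ∈ S) →
      (ψ₁.Realize (Sum.elim c₁ b) ↔ ¬ ψ₂.Realize (Sum.elim c₂ b))) (b : γ → M) :
    ψ₁.Realize (Sum.elim c₁ b) ↔ ¬ ψ₂.Realize (Sum.elim c₂ b) := by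
  let χ : L.Formula ((α₁ ⊕ α₂) ⊕ γ) :=
    (ψ₁.relabel (Sum.map Sum.inl id)).iff (ψ₂.relabel (Sum.map Sum.inr id)).not
  have hχ : ∀ b : γ → M, χ.Realize (Sum.elim (Sum.elim c₁ c₂) b) ↔
      (ψ₁.Realize (Sum.elim c₁ b) ↔ ¬ ψ₂.Realize (Sum.elim c₂ b)) := fun b => by
    simp only [χ, Formula.realize_iff, Formula.realize_not, Formula.realize_relabel]
    exact iff_of_eq (by congr! 3 <;> ext (i | i) <;> rfl)
  rw [← hχ]
  exact S.realize_of_forall_mem (by rintro (i | i); exacts [hc₁ i, hc₂ i])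
    (fun b hb => (hχ b).2 (h b hb)) b

end ElementarySubstructure

theorem ElementaryEmbedding.isElementary_range (f : N ↪ₑ[L] M) : f.toHom.range.IsElementary := by
  let e := f.toEmbedding.equivRange
  let F : f.toHom.range ↪ₑ[L] M := f.comp e.symm.toElementaryEmbedding
  have hF : ∀ y, F y = y := fun y => by
    obtain ⟨z, rfl⟩ := e.surjective y
    show f (e.symm (e z)) = e z
    rw [Equiv.symm_apply_apply, Embedding.equivRange_apply]
    rfl
  intro n φ x
  rw [← F.map_formula φ x]
  exact iff_of_eq (congrArg _ (funext fun i => (hF (x i)).symm))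

def ElementaryEmbedding.elementaryRange (f : N ↪ₑ[L] M) : L.ElementarySubstructure M :=
  ⟨f.toHom.range, f.isElementary_range⟩

@[simp]
theorem ElementaryEmbedding.coe_elementaryRange (f : N ↪ₑ[L] M) :
    (f.elementaryRange : Set M) = Set.range f :=
  Hom.range_coe _

end FirstOrder.Language

open FirstOrder.Language

section Definability

variable {L : FirstOrder.Language} {M : Type u} [L.Structure M] {ι K : Type u} {x y : ι → M}
  {E C : Set M}

theorem EqTp.symm (h : EqTp L x y E) : EqTp L y x E :=
  fun m n f φ b hb => (h m n f φ b hb).symm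

theorem EqTp.comp (h : EqTp L x y E) (g : K → ι) : EqTp L (x ∘ g) (y ∘ g) E :=
  fun m n f φ b hb => h m n (g ∘ f) φ b hb

theorem EqTp.realize_iff (h : EqTp L x y E) {γ : Type*} [Finite γ] (φ : L.Formula γ)
    {u u' : γ → M} (hu : ∀ i, (u i = u' i ∧ u i ∈ E) ∨ ∃ k, u i = x k ∧ u' i = y k) :
    φ.Realize u ↔ φ.Realize u' := by
  classical
  let P i := u i = u' i ∧ u i ∈ E
  choose g hg using fun i : {i // ¬ P i} => (hu i).resolve_left i.2
  obtain ⟨m, ⟨eg⟩⟩ := Finite.exists_equiv_fin {i // ¬ P i}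
  obtain ⟨n, ⟨eb⟩⟩ := Finite.exists_equiv_fin {i // P i}
  let ρ : γ → Fin m ⊕ Fin n := fun i =>
    if hi : P i then Sum.inr (eb ⟨i, hi⟩) else Sum.inl (eg ⟨i, hi⟩)
  have key := h m n (g ∘ eg.symm) (φ.relabel ρ) (fun j => u (eb.symm j)) fun j => (eb.symm j).2.2
  rw [Formula.realize_relabel, Formula.realize_relabel] at key
  have hx : (Sum.elim (x ∘ g ∘ eg.symm) fun j => u (eb.symm j)) ∘ ρ = u := by
    funext i
    by_cases hi : P i
    · simp [ρ, hi]
    · simp [ρ, hi, (hg ⟨i, hi⟩).1]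
  have hy : (Sum.elim (y ∘ g ∘ eg.symm) fun j => u (eb.symm j)) ∘ ρ = u' := by
    funext i
    by_cases hi : P i
    · simp [ρ, hi, hi.1]
    · simp [ρ, hi, (hg ⟨i, hi⟩).2]
  rwa [hx, hy] at key

theorem EqTp.realize_comp_iff (h : EqTp L x y E) {γ : Type*} [Finite γ] (φ : L.Formula γ)
    (v : γ → ι) : φ.Realize (x ∘ v) ↔ φ.Realize (y ∘ v) :=
  h.realize_iff φ fun i => Or.inr ⟨v i, rfl, rfl⟩

theorem EqTp.apply_eq_of_mem (h : EqTp L x y E) {i : ι} (hi : y i ∈ E) : x i = y i := by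
  have key := h.realize_iff ((Term.var 0).equal (Term.var 1) : L.Formula (Fin 2))
    (u := ![x i, y i]) (u' := ![y i, y i]) fun j => by
      fin_cases j
      · exact Or.inr ⟨i, rfl, rfl⟩
      · exact Or.inl ⟨rfl, hi⟩
  simpa using key

def EqTp.toElementaryEmbedding {N : Type u} [L.Structure N] (f : N ↪ₑ[L] M) {y : N → M}
    (h : EqTp L y f E) : N ↪ₑ[L] M where
  toFun := y
  map_formula' _ φ x := (h.realize_comp_iff φ x).trans (f.map_formula φ x)

theorem TpDef.mono {a : ι → M} {B B' : Set M} (h : TpDef L a B C) (hB : B' ⊆ B) :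
    TpDef L a B' C := fun m n f φ =>
  let ⟨k, c, ψ, hc, hψ⟩ := h m n f φ
  ⟨k, c, ψ, hc, fun b hb => hψ b fun i => hB (hb i)⟩

theorem TpDef.of_eqTp {a a' : ι → M} {d d' : K → M} (hCE : C ⊆ E)
    (h : EqTp L (Sum.elim a' d) (Sum.elim a d') E) (hdef : TpDef L a' (E ∪ Set.range d) C) :
    TpDef L a (E ∪ Set.range d') C := by
  intro m n f φ
  obtain ⟨k, c, ψ, hc, hψ⟩ := hdef m n f φ
  refine ⟨k, c, ψ, hc, fun b hb => ?_⟩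
  have hlift : ∀ i, ∃ t, (t = b i ∧ t ∈ E) ∨ ∃ j, t = d j ∧ b i = d' j := fun i => by
    rcases hb i with hi | ⟨j, hj⟩
    · exact ⟨b i, Or.inl ⟨rfl, hi⟩⟩
    · exact ⟨d j, Or.inr ⟨j, rfl, hj.symm⟩⟩
  choose b' hb' using hlift
  have hb'E : ∀ i, b' i ∈ E ∪ Set.range d := fun i => by
    rcases hb' i with ⟨-, hi⟩ | ⟨j, hj, -⟩
    · exact Or.inl hi
    · exact Or.inr ⟨j, hj.symm⟩
  have hmatch : ∀ i, (b' i = b i ∧ b' i ∈ E) ∨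
      ∃ j, b' i = Sum.elim a' d j ∧ b i = Sum.elim a d' j := fun i =>
    (hb' i).imp_right fun ⟨j, hj⟩ => ⟨Sum.inr j, hj⟩
  calc φ.Realize (Sum.elim (a ∘ f) b) ↔ φ.Realize (Sum.elim (a' ∘ f) b') :=
        (h.realize_iff φ <| by
          rintro (i | i); exacts [Or.inr ⟨Sum.inl (f i), rfl, rfl⟩, hmatch i]).symm
    _ ↔ ψ.Realize (Sum.elim c b') := hψ b' hb'E
    _ ↔ ψ.Realize (Sum.elim c b) :=
        h.realize_iff ψ (by rintro (i | i); exacts [Or.inl ⟨rfl, hCE (hc i)⟩, hmatch i])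

namespace GlobalType

variable {p : GlobalType L M ι} {a : ι → M}

theorem ExtendsTp.mem_iff (hp : p.ExtendsTp a E) {m n : ℕ} (f : Fin m → ι)
    (φ : L.Formula (Fin m ⊕ Fin n)) {b : Fin n → M} (hb : ∀ i, b i ∈ E) :
    p.mem m n f φ b ↔ φ.Realize (Sum.elim (a ∘ f) b) := by
  refine ⟨fun h => ?_, hp m n f φ b hb⟩
  by_contra hφ
  exact (p.maximal m n f φ b).1 (hp m n f φ.not b hb hφ) h

theorem RlzOn.mem_iff (hp : p.RlzOn a E) {m n : ℕ} (f : Fin m → ι)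
    (φ : L.Formula (Fin m ⊕ Fin n)) {b : Fin n → M} (hb : ∀ i, b i ∈ E) :
    p.mem m n f φ b ↔ φ.Realize (Sum.elim (a ∘ f) b) := by
  refine ⟨hp m n f φ b hb, fun h => ?_⟩
  by_contra hmem
  exact hp m n f φ.not b hb ((p.maximal m n f φ b).2 hmem) h

theorem ExtendsTp.eqTp {a' : ι → M} {E' : Set M} (hp : p.ExtendsTp a E) (hp' : p.RlzOn a' E')
    (hE : E ⊆ E') : EqTp L a' a E := fun _ _ f φ _ hb =>
  (hp'.mem_iff f φ fun i => hE (hb i)).symm.trans (hp.mem_iff f φ hb)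

theorem CDefinable.tpDef (hp : p.CDefinable C) (ha : p.RlzOn a E) : TpDef L a E C :=
  fun m n f φ =>
    let ⟨k, c, ψ, hc, hψ⟩ := hp m n f φ
    ⟨k, c, ψ, hc, fun b hb => (ha.mem_iff f φ hb).symm.trans (hψ b)⟩

end GlobalType

theorem indep1_of_tpDef (S : L.ElementarySubstructure M) {a : ι → M} {B : Set M}
    (hBC : B ∪ C ⊆ S) (h : TpDef L a S C) : Indep1 L a C B := by
  choose k c ψ hc hψ using h
  have hcS : ∀ m n f φ i, c m n f φ i ∈ S := fun m n f φ i => hBC (Or.inr (hc m n f φ i))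
  refine ⟨⟨fun m n f φ b => (ψ m n f φ).Realize (Sum.elim (c m n f φ) b), ?_, ?_⟩, ?_, ?_⟩
  · intro N m n f φ b hb
    exact S.exists_realize_of_forall_mem_imp f φ (fun j => c _ _ (f j) (φ j)) (fun j => hcS _ _ _ _)
      (fun j => ψ _ _ (f j) (φ j)) (fun j b hb => (hψ _ _ (f j) (φ j) b hb).2) b hb
  · intro m n f φ b
    refine S.realize_iff_not_of_forall_mem (hcS _ _ _ _) (hcS _ _ _ _) (fun b hb => ?_) b
    rw [← hψ m n f φ.not b hb, ← hψ m n f φ b hb, Formula.realize_not]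
  · exact fun m n f φ => ⟨_, _, _, hc m n f φ, fun b => Iff.rfl⟩
  · exact fun m n f φ b hb => (hψ m n f φ b fun i => hBC (hb i)).1

theorem exists_elementarySubstructure_tpDef (S : L.ElementarySubstructure M) {a : ι → M}
    (hES : E ⊆ S) {d' : S → M} (hd' : EqTp L d' S.subtype E)
    (hdef : TpDef L a (E ∪ Set.range d') C) :
    ∃ T : L.ElementarySubstructure M, E ⊆ T ∧ #T ≤ #S ∧ TpDef L a T C := by
  let g := hd'.toElementaryEmbedding S.subtype
  have hT : (g.elementaryRange : Set M) = Set.range d' := g.coe_elementaryRange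
  refine ⟨g.elementaryRange, fun x hx => ?_, ?_, hdef.mono ?_⟩
  · rw [hT]
    exact ⟨⟨x, hES hx⟩, hd'.apply_eq_of_mem hx⟩
  · change #(g.elementaryRange : Set M) ≤ _
    rw [hT]
    exact mk_range_le
  · rw [hT]
    exact Set.subset_union_right

end Definability

theorem stmt9 {L : FirstOrder.Language.{v, w}} {M : Type u} [L.Structure M]
    (κ : Cardinal.{u})
    -- monster hypotheses: saturation, homogeneity, downward Löwenheim–Skolem
    (hsat : ∀ (J : Type u), #J < κ → ∀ E : Set M, #E < κ →
      ∀ p : GlobalType L M J, ∃ a : J → M, p.RlzOn a E)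
    (hhom : ∀ (J J' : Type u), #J < κ → #J' < κ → ∀ E : Set M, #E < κ →
      ∀ (x y : J → M) (w : J' → M), EqTp L x y E →
        ∃ w' : J' → M, EqTp L (Sum.elim x w) (Sum.elim y w') E)
    (hLS : ∀ E : Set M, #E < κ → ∃ S : L.ElementarySubstructure M,
      E ⊆ (S : L.Substructure M) ∧ #((S : L.Substructure M) : Set M) < κ)
    {ι : Type u} (hι : #ι < κ) (a : ι → M)
    (B C : Set M) (hB : #B < κ) (hC : #C < κ) :
    (Indep1 L a C B ↔
      ∀ (J : Type u) (d : J → M), #J < κ →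
        ∃ a' : ι → M, EqTp L a' a (B ∪ C) ∧ TpDef L a' (B ∪ C ∪ Set.range d) C) ∧
    (Indep1 L a C B ↔
      ∀ (J : Type u) (d : J → M), #J < κ →
        ∃ d' : J → M, EqTp L d' d (B ∪ C) ∧ TpDef L a (B ∪ C ∪ Set.range d') C) ∧
    (Indep1 L a C B ↔
      ∃ S : L.ElementarySubstructure M, B ∪ C ⊆ (S : L.Substructure M) ∧
        #((S : L.Substructure M) : Set M) < κ ∧
        TpDef L a ((S : L.Substructure M) : Set M) C) := by
  obtain ⟨S₀, -, hS₀⟩ := hLS B hB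
  have hBC : #(B ∪ C : Set M) < κ := S₀.mk_union_lt hS₀ hB hC
  have tfae : List.TFAE [Indep1 L a C B,
      ∀ (J : Type u) (d : J → M), #J < κ →
        ∃ a' : ι → M, EqTp L a' a (B ∪ C) ∧ TpDef L a' (B ∪ C ∪ Set.range d) C,
      ∀ (J : Type u) (d : J → M), #J < κ →
        ∃ d' : J → M, EqTp L d' d (B ∪ C) ∧ TpDef L a (B ∪ C ∪ Set.range d') C,
      ∃ S : L.ElementarySubstructure M, B ∪ C ⊆ (S : L.Substructure M) ∧
        #((S : L.Substructure M) : Set M) < κ ∧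
        TpDef L a ((S : L.Substructure M) : Set M) C] := by
    tfae_have 1 → 2 := by
      rintro ⟨p, hp, hext⟩ J d hJ
      obtain ⟨a', ha'⟩ := hsat ι hι _ (S₀.mk_union_lt hS₀ hBC (mk_range_le.trans_lt hJ)) p
      exact ⟨a', hext.eqTp ha' Set.subset_union_left, hp.tpDef ha'⟩
    tfae_have 2 → 3 := by
      intro h2 J d hJ
      obtain ⟨a', haa', hdef⟩ := h2 J d hJ
      obtain ⟨d', hd'⟩ := hhom ι J hι hJ _ hBC a' a d haa'
      exact ⟨d', (hd'.comp Sum.inr).symm, hdef.of_eqTp Set.subset_union_right hd'⟩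
    tfae_have 3 → 4 := by
      intro h3
      obtain ⟨S, hBCS, hS⟩ := hLS _ hBC
      obtain ⟨d', hd', hdef⟩ := h3 S S.subtype hS
      obtain ⟨T, hBCT, hTS, hT⟩ := exists_elementarySubstructure_tpDef S hBCS hd' hdef
      exact ⟨T, hBCT, hTS.trans_lt hS, hT⟩
    tfae_have 4 → 1 := fun ⟨S, hBCS, _, hdef⟩ => indep1_of_tpDef S hBCS hdef
    tfae_finish
  exact ⟨tfae.out 0 1, tfae.out 0 2, tfae.out 0 3⟩
end

section
/- The relation ⫝¹ satisfies left-transitivity: if a₁ ⫝¹_C B and a₂ ⫝¹_{C a₁} B, then a₂a₁ ⫝¹_C B. -/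
/- STATEMENT 10: The relation ⫝¹ satisfies left-transitivity: if a₁ ⫝¹_C B and
a₂ ⫝¹_{C a₁} B, then a₂a₁ ⫝¹_C B.  Here a ⫝¹_C B means tp(a/BC) extends to a
global C-definable type, in the monster model (axiomatized by saturation,
homogeneity and Löwenheim–Skolem hypotheses relative to κ). -/

open FirstOrder Cardinal

universe u v w

/-!
`p₂` has a definition scheme over `C ∪ a₁`: whether `φ(x₂; x₁, y) ∈ p₂` is expressed by a formula
`dφ(x₁, y)` with parameters from `C` and from `a₁`. Turning those parameters from `a₁` into the
corresponding variables of `x₁` gives a `C`-formula `d'φ(x₁, y)`, which is correct at `x₁ = a₁`.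
Put `φ(x₂, x₁; b) ∈ q` iff `d'φ(x₁, b) ∈ p₁`; then `q` is `C`-definable because `p₁` is.
That `q` is consistent and complete is expressed, finitely many formulas at a time, by
`C`-formulas in `x₁` that hold at `a₁` because `p₂` is a complete type, so they lie in `p₁`.
Finally `q` extends `tp(a₂a₁/BC)` because `p₂` extends `tp(a₂/BCa₁)` and `p₁` extends `tp(a₁/BC)`.
-/

open FirstOrder FirstOrder.Language Set

namespace FirstOrder.Language.Formula

variable {L : FirstOrder.Language.{v, w}} {M : Type u} [L.Structure M]

theorem exists_fin_realize_iff {γ α : Type*} (ψ : L.Formula (γ ⊕ α)) :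
    ∃ (m n : ℕ) (f : Fin m → α) (g : Fin n → γ) (φ : L.Formula (Fin m ⊕ Fin n)),
      f.Injective ∧ ∀ (w : γ → M) (x : α → M),
        ψ.Realize (Sum.elim w x) ↔ φ.Realize (Sum.elim (x ∘ f) (w ∘ g)) := by
  classical
  set F := ψ.freeVarFinset
  let eγ := F.toLeft.equivFin
  let eα := F.toRight.equivFin
  let r : F → Fin F.toRight.card ⊕ Fin F.toLeft.card := fun a =>
    match a with
    | ⟨.inl c, h⟩ => .inr (eγ ⟨c, Finset.mem_toLeft.2 h⟩)
    | ⟨.inr i, h⟩ => .inl (eα ⟨i, Finset.mem_toRight.2 h⟩)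
  refine ⟨_, _, fun i => eα.symm i, fun i => eγ.symm i, ψ.restrictFreeVar r,
    Subtype.val_injective.comp eα.symm.injective, fun w x => ?_⟩
  refine (BoundedFormula.realize_restrictFreeVar _ fun a => ?_).symm
  rcases a with ⟨c | i, h⟩ <;> simp [r]

end FirstOrder.Language.Formula

namespace Set

variable {L : FirstOrder.Language.{v, w}} {M : Type u} [L.Structure M] {A : Set M} {α β : Type*}

theorem Definable.exists_fin_formula {s : Set (α → M)} (hs : A.Definable L s) :
    ∃ (m n : ℕ) (f : Fin m → α) (φ : L.Formula (Fin m ⊕ Fin n)) (b : Fin n → M),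
      (∀ i, b i ∈ A) ∧ s = {x | φ.Realize (Sum.elim (x ∘ f) b)} := by
  obtain ⟨ψ, rfl⟩ := definable_iff_exists_formula_sum.1 hs
  obtain ⟨m, n, f, g, φ, -, hφ⟩ := ψ.exists_fin_realize_iff (M := M)
  exact ⟨m, n, f, φ, fun i => (g i).1, fun i => (g i).2, by ext x; exact hφ _ x⟩

theorem Definable.exists_formula_params {n : ℕ} {s : Set (Fin n → M)} (hs : A.Definable L s) :
    ∃ (k : ℕ) (c : Fin k → M) (ψ : L.Formula (Fin k ⊕ Fin n)),
      (∀ i, c i ∈ A) ∧ ∀ b, b ∈ s ↔ ψ.Realize (Sum.elim c b) := by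
  obtain ⟨m, k, f, φ, c, hc, rfl⟩ := hs.exists_fin_formula
  refine ⟨k, c, φ.relabel (Sum.elim (Sum.inr ∘ f) Sum.inl), hc, fun b => ?_⟩
  show φ.Realize _ ↔ _
  rw [Formula.realize_relabel]
  exact iff_of_eq (congrArg _ (by ext (i | i) <;> rfl))

theorem definable_setOf_realize_comp (φ : L.Formula β) (r : β → A ⊕ α) :
    A.Definable L {x : α → M | φ.Realize (Sum.elim (↑) x ∘ r)} :=
  definable_iff_exists_formula_sum.2 ⟨φ.relabel r, by ext; simp [Formula.realize_relabel]⟩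

theorem Definable.exists_sumElim {S : Set (α ⊕ β → M)} (hS : A.Definable L S) :
    A.Definable L {v : α → M | ∃ u : β → M, Sum.elim v u ∈ S} := by
  rcases isEmpty_or_nonempty (β → M) with hβ | ⟨⟨u₀⟩⟩
  · simp
  obtain ⟨ψ, rfl⟩ := definable_iff_exists_formula_sum.1 hS
  obtain ⟨m, n, f, g, φ, hf, hφ⟩ :=
    (ψ.relabel (Equiv.sumAssoc A α β).symm).exists_fin_realize_iff (M := M)
  have hψ : ∀ v u, ψ.Realize (Sum.elim Subtype.val (Sum.elim v u)) ↔
      φ.Realize (Sum.elim (u ∘ f) (Sum.elim Subtype.val v ∘ g)) := by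
    intro v u
    rw [← hφ, Formula.realize_relabel]
    exact iff_of_eq (congrArg _ (by ext (a | a | b) <;> rfl))
  refine definable_iff_exists_formula_sum.2
    ⟨(φ.relabel (Sum.elim Sum.inr (Sum.inl ∘ g))).iExs (Fin m), ?_⟩
  ext v
  simp only [mem_ofPred_eq, hψ, Formula.realize_iExs, Formula.realize_relabel]
  constructor
  · rintro ⟨u, hu⟩
    exact ⟨u ∘ f, by convert hu using 2; ext (i | i) <;> rfl⟩
  · rintro ⟨u, hu⟩
    -- `φ` only sees the coordinates in the range of `f`; `u₀` fills in the others.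
    refine ⟨Function.extend f u u₀, ?_⟩
    convert hu using 2
    ext (i | i)
    · exact hf.extend_apply u u₀ i
    · rfl

theorem Definable.setOf_sumElim_mem {T : Set (α ⊕ β → M)} (hT : A.Definable L T) (y : β → M) :
    (A ∪ range y).Definable L {x | Sum.elim x y ∈ T} := by
  obtain ⟨ψ, rfl⟩ := definable_iff_exists_formula_sum.1 hT
  convert definable_setOf_realize_comp ψ
    (Sum.elim (fun a : A => .inl (⟨a, .inl a.2⟩ : ↥(A ∪ range y)))
      (Sum.elim .inr fun j => .inl ⟨y j, .inr ⟨j, rfl⟩⟩)) using 2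
  refine Set.ext fun x => show ψ.Realize _ ↔ ψ.Realize _ from iff_of_eq (congrArg _ ?_)
  ext (a | i | j) <;> rfl

theorem Definable.exists_definable_sumElim {ι : Type*} {a : ι → M} {s : Set (α → M)}
    (hs : (A ∪ range a).Definable L s) :
    ∃ t : Set (ι ⊕ α → M), A.Definable L t ∧ ∀ y, Sum.elim a y ∈ t ↔ y ∈ s := by
  classical
  obtain ⟨ψ, rfl⟩ := definable_iff_exists_formula_sum.1 hs
  let r : ↥(A ∪ range a) → A ⊕ (ι ⊕ α) := fun c =>
    if h : c.1 ∈ A then .inl ⟨c, h⟩ else .inr (.inl (c.2.resolve_left h).choose)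
  refine ⟨_, definable_setOf_realize_comp ψ (Sum.elim r (Sum.inr ∘ Sum.inr)), fun y => ?_⟩
  show ψ.Realize _ ↔ ψ.Realize _
  refine iff_of_eq (congrArg _ ?_)
  ext (c | i)
  · by_cases h : c.1 ∈ A
    · simp [r, h]
    · simpa [r, h] using (c.2.resolve_left h).choose_spec
  · rfl

end Set

namespace FirstOrder.Language.Formula

variable {L : FirstOrder.Language.{v, w}} {M : Type u} [L.Structure M] {α : Type*}

def realizeSet {m n : ℕ} (φ : L.Formula (Fin m ⊕ Fin n)) (f : Fin m → α) :
    Set (α ⊕ Fin n → M) :=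
  {v | φ.Realize (v ∘ Sum.map f id)}

theorem sumElim_mem_realizeSet {m n : ℕ} {φ : L.Formula (Fin m ⊕ Fin n)} {f : Fin m → α}
    {x : α → M} {b : Fin n → M} :
    Sum.elim x b ∈ φ.realizeSet f ↔ φ.Realize (Sum.elim (x ∘ f) b) := by
  simp [realizeSet, Sum.elim_comp_map]

theorem definable_realizeSet {A : Set M} {m n : ℕ} (φ : L.Formula (Fin m ⊕ Fin n))
    (f : Fin m → α) : A.Definable L (φ.realizeSet f) :=
  Set.definable_setOf_realize_comp φ (Sum.inr ∘ Sum.map f id)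

end FirstOrder.Language.Formula

namespace GlobalType

variable {L : FirstOrder.Language.{v, w}} {M : Type u} [L.Structure M] {ι : Type u}

def toFilter (p : GlobalType L M ι) : Filter (ι → M) :=
  Filter.generate
    {s | ∃ m n f φ b, p.mem m n f φ b ∧ s = {x | φ.Realize (Sum.elim (x ∘ f) b)}}

instance (p : GlobalType L M ι) : p.toFilter.NeBot := by
  refine Filter.generate_neBot_iff.2 fun t ht htfin => ?_
  have := htfin.to_subtype
  let e := Finite.equivFin t
  choose m n f φ b hmem hs using fun j => ht (e.symm j).2
  obtain ⟨x, hx⟩ := p.finSat _ m n f φ b hmem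
  refine ⟨x, fun s hst => ?_⟩
  have hj := hs (e ⟨s, hst⟩)
  simp only [Equiv.symm_apply_apply] at hj
  rw [hj]
  exact hx _

theorem mem_toFilter_iff (p : GlobalType L M ι) {m n : ℕ} {f : Fin m → ι}
    {φ : L.Formula (Fin m ⊕ Fin n)} {b : Fin n → M} :
    {x | φ.Realize (Sum.elim (x ∘ f) b)} ∈ p.toFilter ↔ p.mem m n f φ b := by
  refine ⟨fun h => ?_, fun h => Filter.mem_generate_of_mem ⟨m, n, f, φ, b, h, rfl⟩⟩
  by_contra hn
  refine Filter.compl_notMem h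
    (Filter.mem_generate_of_mem ⟨m, n, f, φ.not, b, (p.maximal ..).2 hn, ?_⟩)
  ext x
  simp

theorem compl_mem_toFilter_iff (p : GlobalType L M ι) {A : Set M} {s : Set (ι → M)}
    (hs : A.Definable L s) : sᶜ ∈ p.toFilter ↔ s ∉ p.toFilter := by
  obtain ⟨m, n, f, φ, b, -, rfl⟩ := hs.exists_fin_formula
  have hcompl : {x | φ.Realize (Sum.elim (x ∘ f) b)}ᶜ =
      {x | φ.not.Realize (Sum.elim (x ∘ f) b)} := by
    ext x
    simp
  rw [hcompl, mem_toFilter_iff, mem_toFilter_iff, p.maximal]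

theorem ExtendsTp.mono {p : GlobalType L M ι} {a : ι → M} {E E' : Set M}
    (h : p.ExtendsTp a E) (hE : E' ⊆ E) : p.ExtendsTp a E' :=
  fun m n f φ b hb => h m n f φ b fun i => hE (hb i)

theorem ExtendsTp.mem_toFilter {p : GlobalType L M ι} {a : ι → M} {E : Set M}
    (h : p.ExtendsTp a E) {s : Set (ι → M)} (hs : E.Definable L s) (ha : a ∈ s) :
    s ∈ p.toFilter := by
  obtain ⟨m, n, f, φ, b, hb, rfl⟩ := hs.exists_fin_formula
  exact p.mem_toFilter_iff.2 (h m n f φ b hb ha)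

theorem CDefinable.definable_setOf_mem_toFilter {p : GlobalType L M ι} {C : Set M}
    (hp : p.CDefinable C) {β : Type*} {T : Set (ι ⊕ β → M)} (hT : C.Definable L T) :
    C.Definable L {y : β → M | {x | Sum.elim x y ∈ T} ∈ p.toFilter} := by
  obtain ⟨ψ, rfl⟩ := Set.definable_iff_exists_formula_sum.1 hT
  obtain ⟨m, n, f, g, φ, -, hφ⟩ := (ψ.relabel (Sum.elim (Sum.inl ∘ Sum.inl)
    (Sum.elim Sum.inr (Sum.inl ∘ Sum.inr)))).exists_fin_realize_iff (M := M)
  obtain ⟨k, c, χ, hc, hχ⟩ := hp m n f φ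
  have hfiber : ∀ y, {x | Sum.elim x y ∈ {v | ψ.Realize (Sum.elim Subtype.val v)}} =
      {x | φ.Realize (Sum.elim (x ∘ f) (Sum.elim Subtype.val y ∘ g))} := by
    intro y
    ext x
    show ψ.Realize _ ↔ φ.Realize _
    rw [← hφ, Formula.realize_relabel]
    exact iff_of_eq (congrArg _ (by ext (a | i | j) <;> rfl))
  simp_rw [hfiber, mem_toFilter_iff, hχ]
  convert Set.definable_setOf_realize_comp χ (Sum.elim (fun i => .inl ⟨c i, hc i⟩) g) using 2
  refine Set.ext fun y => show χ.Realize _ ↔ χ.Realize _ from iff_of_eq (congrArg _ ?_)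
  ext (i | i) <;> rfl

variable {ι₁ ι₂ : Type u} {p₁ : GlobalType L M ι₁} {p₂ : GlobalType L M ι₂}
  {a₁ : ι₁ → M} {a₂ : ι₂ → M} {B C : Set M}
  {T : ∀ m n : ℕ, (Fin m → ι₂ ⊕ ι₁) → L.Formula (Fin m ⊕ Fin n) → Set (ι₁ ⊕ Fin n → M)}

/-- A definition scheme of `p₂` over `C`, with the parameters from `a₁` turned into the
variables `x₁`: it is correct at `x₁ = a₁`. -/
def IsUniformDefinition (p₂ : GlobalType L M ι₂) (a₁ : ι₁ → M) (C : Set M)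
    (T : ∀ m n : ℕ, (Fin m → ι₂ ⊕ ι₁) → L.Formula (Fin m ⊕ Fin n) → Set (ι₁ ⊕ Fin n → M)) :
    Prop :=
  ∀ m n f φ, C.Definable L (T m n f φ) ∧ ∀ b,
    Sum.elim a₁ b ∈ T m n f φ ↔ {x₂ | Sum.elim (Sum.elim x₂ a₁) b ∈ φ.realizeSet f} ∈ p₂.toFilter

theorem CDefinable.exists_isUniformDefinition (hdef₂ : p₂.CDefinable (C ∪ range a₁)) :
    ∃ T, p₂.IsUniformDefinition a₁ C T := by
  suffices ∀ (m n : ℕ) (f : Fin m → ι₂ ⊕ ι₁) (φ : L.Formula (Fin m ⊕ Fin n)),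
      ∃ T : Set (ι₁ ⊕ Fin n → M), C.Definable L T ∧ ∀ b, Sum.elim a₁ b ∈ T ↔
        {x₂ | Sum.elim (Sum.elim x₂ a₁) b ∈ φ.realizeSet f} ∈ p₂.toFilter by
    choose T hT using this
    exact ⟨T, hT⟩
  intro m n f φ
  have hG := (φ.definable_realizeSet (A := C ∪ range a₁) f).preimage_comp
    (Equiv.sumAssoc ι₂ ι₁ (Fin n))
  obtain ⟨t, ht, hta⟩ := (hdef₂.definable_setOf_mem_toFilter hG).exists_definable_sumElim
  refine ⟨(· ∘ Sum.elim Sum.inl id) ⁻¹' t, ht.preimage_comp _, fun b => ?_⟩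
  have hab : Sum.elim a₁ b ∘ Sum.elim Sum.inl id = Sum.elim a₁ (Sum.elim a₁ b) := by
    ext (i | i | i) <;> rfl
  rw [mem_preimage, hab, hta]
  refine iff_of_eq (congrArg (· ∈ p₂.toFilter) (Set.ext fun x₂ => iff_of_eq ?_))
  exact congrArg (· ∈ φ.realizeSet f)
    (by ext ((i | i) | i) <;> rfl : Sum.elim x₂ (Sum.elim a₁ b) ∘ Equiv.sumAssoc _ _ _ = _)

theorem IsUniformDefinition.fiber_not_mem_toFilter_iff (hT : p₂.IsUniformDefinition a₁ C T)
    (hext₁ : p₁.ExtendsTp a₁ C) {m n : ℕ} (f : Fin m → ι₂ ⊕ ι₁)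
    (φ : L.Formula (Fin m ⊕ Fin n)) (b : Fin n → M) :
    {x₁ | Sum.elim x₁ b ∈ T m n f φ.not} ∈ p₁.toFilter ↔
      {x₁ | Sum.elim x₁ b ∈ T m n f φ} ∉ p₁.toFilter := by
  set Tn := T m n f φ.not
  set Tp := T m n f φ
  let U := {x₁ : ι₁ → M | ∀ b', Sum.elim x₁ b' ∈ (Tn ⇨ Tpᶜ) ∩ (Tpᶜ ⇨ Tn)}
  have hU : U ∈ p₁.toFilter := by
    refine hext₁.mem_toFilter ((((hT ..).1.himp (hT ..).1.compl).inter
      ((hT ..).1.compl.himp (hT ..).1)).forall_of_finite) fun b' => ?_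
    have hcompl := p₂.compl_mem_toFilter_iff
      ((((φ.definable_realizeSet (A := ∅) f).setOf_sumElim_mem b').setOf_sumElim_mem a₁))
    simp only [mem_inter_iff, mem_himp_iff, mem_compl_iff]
    rw [(hT ..).2, (hT ..).2]
    exact ⟨hcompl.1, hcompl.2⟩
  rw [← p₁.compl_mem_toFilter_iff ((hT ..).1.setOf_sumElim_mem b)]
  exact Filter.congr_sets (Filter.mem_of_superset hU fun x₁ hx₁ => ⟨(hx₁ b).1, (hx₁ b).2⟩)

theorem IsUniformDefinition.exists_realize_of_forall_fiber_mem
    (hT : p₂.IsUniformDefinition a₁ C T) (hext₁ : p₁.ExtendsTp a₁ C)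
    {N : ℕ} {m n : Fin N → ℕ} (f : ∀ j, Fin (m j) → ι₂ ⊕ ι₁)
    (φ : ∀ j, L.Formula (Fin (m j) ⊕ Fin (n j))) (b : ∀ j, Fin (n j) → M)
    (h : ∀ j, {x₁ | Sum.elim x₁ (b j) ∈ T _ _ (f j) (φ j)} ∈ p₁.toFilter) :
    ∃ x : ι₂ ⊕ ι₁ → M, ∀ j, (φ j).Realize (Sum.elim (x ∘ f j) (b j)) := by
  let σ (j) : ι₁ ⊕ Fin (n j) → ι₁ ⊕ (Σ j, Fin (n j)) :=
    Sum.map id (Sigma.mk (β := fun j => Fin (n j)) j)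
  let ρ (j) : (ι₂ ⊕ ι₁) ⊕ Fin (n j) → (ι₁ ⊕ (Σ j, Fin (n j))) ⊕ ι₂ :=
    Sum.elim (Sum.elim Sum.inr (Sum.inl ∘ Sum.inl))
      (Sum.inl ∘ Sum.inr ∘ Sigma.mk (β := fun j => Fin (n j)) j)
  have hσ : ∀ (x₁ : ι₁ → M) u j, Sum.elim x₁ u ∘ σ j = Sum.elim x₁ fun i => u ⟨j, i⟩ := by
    intros; ext (i | i) <;> rfl
  have hρ : ∀ (x₁ : ι₁ → M) u (x₂ : ι₂ → M) j,
      Sum.elim (Sum.elim x₁ u) x₂ ∘ ρ j = Sum.elim (Sum.elim x₂ x₁) fun i => u ⟨j, i⟩ := by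
    intros; ext ((i | i) | i) <;> rfl
  -- `x₁ ∈ Θ`: the definitions at `x₁` of the `φ j`, with any parameters, are jointly consistent.
  -- This holds at `a₁` because `p₂` is finitely satisfiable.
  let Θ := {x₁ : ι₁ → M | ∀ u : (Σ j, Fin (n j)) → M,
    Sum.elim x₁ u ∈ (⋂ j, (· ∘ σ j) ⁻¹' T _ _ (f j) (φ j)) ⇨
      {w | ∃ x₂ : ι₂ → M, Sum.elim w x₂ ∈ ⋂ j, (· ∘ ρ j) ⁻¹' (φ j).realizeSet (f j)}}
  have hΘ : Θ ∈ p₁.toFilter := by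
    refine hext₁.mem_toFilter (((definable_iInter_of_finite fun j =>
      (hT ..).1.preimage_comp (σ j)).himp (definable_iInter_of_finite fun j =>
        ((φ j).definable_realizeSet (f j)).preimage_comp (ρ j)).exists_sumElim).forall_of_finite)
      fun u hu => ?_
    simp only [mem_iInter, mem_preimage, hσ, (hT _ _ _ _).2] at hu
    obtain ⟨x₂, hx₂⟩ := Filter.nonempty_of_mem (Filter.iInter_mem.2 hu)
    exact ⟨x₂, by simpa [hρ] using hx₂⟩
  obtain ⟨x₁, hx₁Θ, hx₁⟩ := Filter.nonempty_of_mem (Filter.inter_mem hΘ (Filter.iInter_mem.2 h))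
  obtain ⟨x₂, hx₂⟩ := hx₁Θ (fun s => b s.1 s.2) (by simpa [hσ] using hx₁)
  simp only [mem_iInter, mem_preimage, hρ] at hx₂
  exact ⟨Sum.elim x₂ x₁, fun j => Formula.sumElim_mem_realizeSet.1 (hx₂ j)⟩

theorem IsUniformDefinition.fiber_mem_toFilter_of_realize (hT : p₂.IsUniformDefinition a₁ C T)
    (hext₁ : p₁.ExtendsTp a₁ (B ∪ C)) (hext₂ : p₂.ExtendsTp a₂ (B ∪ (C ∪ range a₁)))
    {m n : ℕ} (f : Fin m → ι₂ ⊕ ι₁) (φ : L.Formula (Fin m ⊕ Fin n)) (b : Fin n → M)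
    (hb : ∀ i, b i ∈ B ∪ C) (hr : φ.Realize (Sum.elim (Sum.elim a₂ a₁ ∘ f) b)) :
    {x₁ | Sum.elim x₁ b ∈ T m n f φ} ∈ p₁.toFilter := by
  refine hext₁.mem_toFilter (((hT ..).1.setOf_sumElim_mem b).mono
    (union_subset subset_union_right (range_subset_iff.2 hb))) ((hT ..).2 _ |>.2 ?_)
  refine hext₂.mem_toFilter ((((φ.definable_realizeSet (A := ∅) f).setOf_sumElim_mem
    b).setOf_sumElim_mem a₁).mono ?_) (Formula.sumElim_mem_realizeSet.2 hr)
  rintro c ((hc | ⟨i, rfl⟩) | ⟨i, rfl⟩)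
  · exact hc.elim
  · exact (hb i).elim Or.inl (Or.inr ∘ Or.inl)
  · exact Or.inr (Or.inr ⟨i, rfl⟩)

end GlobalType

theorem stmt10_general {L : FirstOrder.Language.{v, w}} {M : Type u} [L.Structure M]
    {ι₁ ι₂ : Type u}
    (a₁ : ι₁ → M) (a₂ : ι₂ → M) (B C : Set M)
    (h₁ : Indep1 L a₁ C B)
    (h₂ : Indep1 L a₂ (C ∪ Set.range a₁) B) :
    Indep1 L (Sum.elim a₂ a₁ : ι₂ ⊕ ι₁ → M) C B := by
  obtain ⟨p₁, hdef₁, hext₁⟩ := h₁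
  obtain ⟨p₂, hdef₂, hext₂⟩ := h₂
  obtain ⟨T, hT⟩ := hdef₂.exists_isUniformDefinition
  have hext₁C := hext₁.mono subset_union_right
  refine ⟨⟨fun m n f φ b => {x₁ | Sum.elim x₁ b ∈ T m n f φ} ∈ p₁.toFilter,
      fun _ _ _ f φ b => hT.exists_realize_of_forall_fiber_mem hext₁C f φ b,
      fun _ _ f φ b => hT.fiber_not_mem_toFilter_iff hext₁C f φ b⟩,
    fun m n f φ => (hdef₁.definable_setOf_mem_toFilter (hT m n f φ).1).exists_formula_params,
    fun _ _ f φ b hb hr => hT.fiber_mem_toFilter_of_realize hext₁ hext₂ f φ b hb hr⟩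

theorem stmt10 {L : FirstOrder.Language.{v, w}} {M : Type u} [L.Structure M]
    (κ : Cardinal.{u})
    (hsat : ∀ (J : Type u), #J < κ → ∀ E : Set M, #E < κ →
      ∀ p : GlobalType L M J, ∃ a : J → M, p.RlzOn a E)
    (hhom : ∀ (J J' : Type u), #J < κ → #J' < κ → ∀ E : Set M, #E < κ →
      ∀ (x y : J → M) (w : J' → M), EqTp L x y E →
        ∃ w' : J' → M, EqTp L (Sum.elim x w) (Sum.elim y w') E)
    (hLS : ∀ E : Set M, #E < κ → ∃ S : L.ElementarySubstructure M,
      E ⊆ (S : L.Substructure M) ∧ #((S : L.Substructure M) : Set M) < κ)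
    {ι₁ ι₂ : Type u} (hι₁ : #ι₁ < κ) (hι₂ : #ι₂ < κ)
    (a₁ : ι₁ → M) (a₂ : ι₂ → M) (B C : Set M) (hB : #B < κ) (hC : #C < κ)
    (h₁ : Indep1 L a₁ C B)
    (h₂ : Indep1 L a₂ (C ∪ Set.range a₁) B) :
    Indep1 L (Sum.elim a₂ a₁ : ι₂ ⊕ ι₁ → M) C B :=
  stmt10_general a₁ a₂ B C h₁ h₂
end

section
/- In a model K of ACVF, the generic type p_𝒪 of the valuation ring 𝒪 is dominated along the residue map res : 𝒪 → k, and res_* p_𝒪 = p_k: for any parameter set C, x ⊨ p_𝒪|C if and only if res(x) ⊨ p_k|C, i.e., if and only if x ∈ 𝒪 and res(x) ∉ acl^eq(C). -/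
/- STATEMENT 16: In a monster model K of ACVF, the generic type p_𝒪 of the
valuation ring is dominated along the residue map, and res_* p_𝒪 = p_k: for
every (small) parameter set C and x ∈ K,
  x ⊨ p_𝒪|C  (x ∈ 𝒪 and x lies in no acl^eq(C)-definable proper subball of 𝒪)
iff res(x) ⊨ p_k|C, i.e. iff x ∈ 𝒪 and res(x) ∉ acl^eq(C).
Imaginaries (subballs, residues=fibers x+𝔪 of res) are treated via their
automorphism orbits: membership in acl^eq(C) means having finitely many
conjugates under automorphisms fixing C, which is justified by the strong
homogeneity hypothesis `hhomog`. -/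

open FirstOrder Cardinal

inductive VFConst : Type | zero | one
inductive VFBin : Type | add | mul

/-- The language of valued fields: 0, 1, -, +, ·, and a binary divisibility
relation (interpreted as val x ≤ val y). -/
def vfLang : FirstOrder.Language where
  Functions := fun n => match n with
    | 0 => VFConst
    | 1 => Unit
    | 2 => VFBin
    | _ => Empty
  Relations := fun n => match n with
    | 2 => Unit
    | _ => Empty

/-- Balls of K relative to a valuation subring O: additive translates of c·𝒪
(closed balls) and c·𝔪 (open balls). -/
def IsBallO {K : Type*} [Field K] (O : ValuationSubring K) (B : Set K) : Prop :=
  ∃ a c : K, B = {x | ∃ t : O, x = a + c * t} ∨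
    B = {x | ∃ t : O, t ∈ IsLocalRing.maximalIdeal O ∧ x = a + c * (t : K)}

/-- Two tuples from K have the same vfLang-type over E. -/
def EqTpV {K : Type*} [vfLang.Structure K] {n : ℕ} (x y : Fin n → K)
    (E : Set K) : Prop :=
  ∀ (k : ℕ) (φ : vfLang.Formula (Fin n ⊕ Fin k)) (b : Fin k → K),
    (∀ i, b i ∈ E) →
    (φ.Realize (Sum.elim x b) ↔ φ.Realize (Sum.elim y b))

/-!
A proper subball of `𝒪` has all its pairwise differences in `𝔪`, so it lies in a single residue
class `x + 𝔪`; and automorphisms of `K` preserve `𝒪`, hence `𝔪` and the residue classes. Thus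
saturating by `𝔪` maps the conjugates over `C` of a subball `B ∋ x` onto the conjugates of
`x + 𝔪`: if `B` is algebraic over `C`, so is `res x`. Conversely `x + 𝔪` is itself a proper
subball of `𝒪` containing `x`.
-/

namespace ValuationSubring

variable {K : Type*} [Field K] (O : ValuationSubring K)

/-- The fibre `res⁻¹ (res x) = x + 𝔪` of the residue map (for `x ∈ O`). -/
def residueClass (x : K) : Set K := {y | y - x ∈ O.nonunits}

variable {O}

theorem setOf_add_maximalIdeal_eq_residueClass (x : K) :
    {y : K | ∃ t : O, t ∈ IsLocalRing.maximalIdeal O ∧ y = x + (t : K)} = O.residueClass x := by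
  ext y
  simp only [residueClass, Set.mem_ofPred_eq, mem_nonunits_iff_exists_mem_maximalIdeal]
  constructor
  · rintro ⟨t, ht, rfl⟩
    exact ⟨by simp, by simpa using ht⟩
  · rintro ⟨h, hm⟩
    exact ⟨_, hm, by simp⟩

theorem mem_residueClass_self (x : K) : x ∈ O.residueClass x := by
  simp [residueClass, O.nonunits.zero_mem]

theorem residueClass_eq_of_mem {x y : K} (h : y ∈ O.residueClass x) :
    O.residueClass y = O.residueClass x := by
  ext z
  have hzy : z - x = (z - y) + (y - x) := by ring
  have hzx : z - y = (z - x) - (y - x) := by ring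
  simp only [residueClass, Set.mem_ofPred_eq] at h ⊢
  exact ⟨fun hz => hzy ▸ O.nonunits.add_mem hz h, fun hz => hzx ▸ O.nonunits.sub_mem hz h⟩

theorem residueClass_subset {x : K} (hx : x ∈ O) : O.residueClass x ⊆ O := fun y hy => by
  simpa using O.add_mem _ _ (nonunits_subset hy) hx

theorem residueClass_ne {x : K} (hx : x ∈ O) : O.residueClass x ≠ O := fun h => by
  have : x + 1 ∈ O.residueClass x := h ▸ O.add_mem _ _ hx O.one_mem
  simp [residueClass, mem_nonunits_iff] at this

theorem isBallO_residueClass (x : K) : IsBallO O (O.residueClass x) :=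
  ⟨x, 1, Or.inr <| by simp [← setOf_add_maximalIdeal_eq_residueClass]⟩

theorem mul_mem_nonunits {a b : K} (ha : a ∈ O.nonunits) (hb : b ∈ O) : a * b ∈ O.nonunits := by
  rw [mem_nonunits_iff] at ha ⊢
  rw [map_mul]
  exact mul_lt_one_of_lt_of_le ha ((O.valuation_le_one_iff b).2 hb)

theorem closedBall_subset_residueClass {a c x : K}
    (hO : {y | ∃ t : O, y = a + c * t} ⊆ O) (hne : {y | ∃ t : O, y = a + c * t} ≠ O)
    (hx : x ∈ {y | ∃ t : O, y = a + c * t}) : {y | ∃ t : O, y = a + c * t} ⊆ O.residueClass x := by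
  have ha : a ∈ O := hO ⟨0, by simp⟩
  have hc : c ∈ O.nonunits := by
    rw [mem_nonunits_iff_or]
    by_contra! h
    refine hne (subset_antisymm hO fun w hw =>
      ⟨⟨c⁻¹ * (w - a), O.mul_mem _ _ h.2 (O.sub_mem hw ha)⟩, ?_⟩)
    field_simp [h.1]
    ring
  rintro _ ⟨t, rfl⟩
  obtain ⟨s, rfl⟩ := hx
  have : a + c * t - (a + c * s) = c * (t - s) := by ring
  simpa [residueClass, this] using mul_mem_nonunits hc (sub_mem t.2 s.2)

theorem openBall_subset_residueClass {a c x : K}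
    (hO : {y | ∃ t : O, t ∈ IsLocalRing.maximalIdeal O ∧ y = a + c * t} ⊆ O)
    (hne : {y | ∃ t : O, t ∈ IsLocalRing.maximalIdeal O ∧ y = a + c * t} ≠ O)
    (hx : x ∈ {y | ∃ t : O, t ∈ IsLocalRing.maximalIdeal O ∧ y = a + c * t}) :
    {y | ∃ t : O, t ∈ IsLocalRing.maximalIdeal O ∧ y = a + c * t} ⊆ O.residueClass x := by
  have ha : a ∈ O := hO ⟨0, (IsLocalRing.maximalIdeal O).zero_mem, by simp⟩
  have hc : c ∈ O := by
    by_contra h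
    have hc0 : c ≠ 0 := by rintro rfl; exact h O.zero_mem
    have hcinv : c⁻¹ ∈ O.nonunits := (O.inv_mem_nonunits_iff).2 (Or.inr h)
    refine hne (subset_antisymm hO fun w hw => ?_)
    obtain ⟨_, hm⟩ :=
      mem_nonunits_iff_exists_mem_maximalIdeal.1 (mul_mem_nonunits hcinv (O.sub_mem hw ha))
    refine ⟨_, hm, ?_⟩
    field_simp
    ring
  rintro _ ⟨t, ht, rfl⟩
  obtain ⟨s, hs, rfl⟩ := hx
  have : a + c * t - (a + c * s) = (t - s : O) * c := by push_cast; ring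
  simpa [residueClass, this] using
    mul_mem_nonunits (coe_mem_nonunits_iff.2 (sub_mem ht hs)) hc

theorem IsBallO.subset_residueClass {B : Set K} (hB : IsBallO O B) (hO : B ⊆ O) (hne : B ≠ O)
    {x : K} (hx : x ∈ B) : B ⊆ O.residueClass x := by
  obtain ⟨a, c, rfl | rfl⟩ := hB
  · exact closedBall_subset_residueClass hO hne hx
  · exact openBall_subset_residueClass hO hne hx

theorem biUnion_residueClass_eq {B : Set K} {x : K} (hx : x ∈ B) (hB : B ⊆ O.residueClass x) :
    ⋃ b ∈ B, O.residueClass b = O.residueClass x :=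
  subset_antisymm (Set.iUnion₂_subset fun _ hb => (residueClass_eq_of_mem (hB hb)).subset)
    (Set.subset_biUnion_of_mem (u := O.residueClass) hx)

theorem map_mem_nonunits_iff {τ : K ≃+* K} (hτ : ∀ a, τ a ∈ O ↔ a ∈ O) {a : K} :
    τ a ∈ O.nonunits ↔ a ∈ O.nonunits := by
  simp only [mem_nonunits_iff_or, map_eq_zero_iff τ τ.injective, ← map_inv₀, hτ]

theorem image_residueClass {τ : K ≃+* K} (hτ : ∀ a, τ a ∈ O ↔ a ∈ O) (x : K) :
    τ '' O.residueClass x = O.residueClass (τ x) := by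
  ext y
  rw [← τ.apply_symm_apply y, τ.injective.mem_set_image]
  simp only [residueClass, Set.mem_ofPred_eq, ← map_sub, map_mem_nonunits_iff hτ]

theorem biUnion_residueClass_image {τ : K ≃+* K} (hτ : ∀ a, τ a ∈ O ↔ a ∈ O) {B : Set K} {x : K}
    (hx : x ∈ B) (hB : B ⊆ O.residueClass x) :
    ⋃ b ∈ τ '' B, O.residueClass b = τ '' O.residueClass x := by
  rw [image_residueClass hτ]
  exact biUnion_residueClass_eq (Set.mem_image_of_mem τ hx)
    ((Set.image_mono hB).trans (image_residueClass hτ x).subset)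

end ValuationSubring

namespace FirstOrder.Language

variable (L : Language) {M : Type*} [L.Structure M]

/-- `B` is algebraic over `C` (in the imaginary sort of `B`) when this set is finite. -/
def conjugatesOver (C B : Set M) : Set (Set M) :=
  {T | ∃ σ : M ≃[L] M, (∀ c ∈ C, σ c = c) ∧ T = σ '' B}

variable {L}

theorem finite_conjugatesOver_of_map_image {C B F : Set M} (f : Set M → Set M)
    (hf : ∀ σ : M ≃[L] M, f (σ '' B) = σ '' F) (hB : (L.conjugatesOver C B).Finite) :
    (L.conjugatesOver C F).Finite :=
  (hB.image f).subset <| by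
    rintro _ ⟨σ, hσ, rfl⟩
    exact ⟨_, ⟨σ, hσ, rfl⟩, hf σ⟩

end FirstOrder.Language

namespace vfLang

variable {K : Type*} [Field K] [vfLang.Structure K]

def ringEquivOfEquiv
    (hadd : ∀ x y : K, Language.Structure.funMap (L := vfLang) (show vfLang.Functions 2 from VFBin.add) ![x, y] = x + y)
    (hmul : ∀ x y : K, Language.Structure.funMap (L := vfLang) (show vfLang.Functions 2 from VFBin.mul) ![x, y] = x * y)
    (σ : K ≃[vfLang] K) : K ≃+* K where
  toEquiv := σ.toEquiv
  map_add' a b := show σ (a + b) = σ a + σ b by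
    have h : σ ∘ ![a, b] = ![σ a, σ b] := (FinVec.map_eq _ _).symm
    simpa [h, hadd] using σ.map_fun (show vfLang.Functions 2 from VFBin.add) ![a, b]
  map_mul' a b := show σ (a * b) = σ a * σ b by
    have h : σ ∘ ![a, b] = ![σ a, σ b] := (FinVec.map_eq _ _).symm
    simpa [h, hmul] using σ.map_fun (show vfLang.Functions 2 from VFBin.mul) ![a, b]

theorem map_mem_valuationSubring_iff (O : ValuationSubring K)
    (hadd : ∀ x y : K, Language.Structure.funMap (L := vfLang) (show vfLang.Functions 2 from VFBin.add) ![x, y] = x + y)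
    (hmul : ∀ x y : K, Language.Structure.funMap (L := vfLang) (show vfLang.Functions 2 from VFBin.mul) ![x, y] = x * y)
    (hdiv : ∀ x y : K, Language.Structure.RelMap (L := vfLang) (show vfLang.Relations 2 from Unit.unit) ![x, y] ↔
      ∃ t : O, y = (t : K) * x)
    (σ : K ≃[vfLang] K) (a : K) : σ a ∈ O ↔ a ∈ O := by
  have h1 : σ 1 = 1 := map_one (ringEquivOfEquiv hadd hmul σ)
  have h : σ ∘ ![1, a] = ![σ 1, σ a] := (FinVec.map_eq _ _).symm
  have := σ.map_rel (show vfLang.Relations 2 from Unit.unit) ![1, a]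
  rw [h, h1, hdiv, hdiv] at this
  simpa using this

end vfLang

open ValuationSubring

theorem stmt16_general {K : Type*} [Field K] (O : ValuationSubring K)
    [S : vfLang.Structure K]
    (hadd : ∀ x y : K, Language.Structure.funMap (L := vfLang) (show vfLang.Functions 2 from VFBin.add) ![x, y] = x + y)
    (hmul : ∀ x y : K, Language.Structure.funMap (L := vfLang) (show vfLang.Functions 2 from VFBin.mul) ![x, y] = x * y)
    (hdiv : ∀ x y : K, Language.Structure.RelMap (L := vfLang) (show vfLang.Relations 2 from Unit.unit) ![x, y] ↔
      ∃ t : O, y = (t : K) * x)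
    (κ : Cardinal) :
    ∀ C : Set K, #C < κ → ∀ x : K,
      ((x ∈ O ∧ ∀ B : Set K, IsBallO O B → B ⊆ (O : Set K) → B ≠ (O : Set K) →
          {T : Set K | ∃ σ : K ≃[vfLang] K,
            (∀ c ∈ C, σ c = c) ∧ T = σ '' B}.Finite → x ∉ B)
        ↔ (x ∈ O ∧ ¬ {T : Set K | ∃ σ : K ≃[vfLang] K, (∀ c ∈ C, σ c = c) ∧
            T = σ '' {y : K | ∃ t : O,
              t ∈ IsLocalRing.maximalIdeal O ∧ y = x + (t : K)}}.Finite)) := by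
  intro C _ x
  rw [setOf_add_maximalIdeal_eq_residueClass]
  constructor
  · rintro ⟨hxO, hgeneric⟩
    exact ⟨hxO, fun hfin => hgeneric _ (isBallO_residueClass x) (residueClass_subset hxO)
      (residueClass_ne hxO) hfin (mem_residueClass_self x)⟩
  · rintro ⟨hxO, hres⟩
    refine ⟨hxO, fun B hB hBO hBne hfin hxB => hres ?_⟩
    refine Language.finite_conjugatesOver_of_map_image (fun T => ⋃ b ∈ T, O.residueClass b)
      (fun σ => ?_) hfin
    exact biUnion_residueClass_image (τ := vfLang.ringEquivOfEquiv hadd hmul σ)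
      (vfLang.map_mem_valuationSubring_iff O hadd hmul hdiv σ) hxB
      (hB.subset_residueClass hBO hBne hxB)

theorem stmt16 {K : Type*} [Field K] [IsAlgClosed K] (O : ValuationSubring K)
    (hnontriv : ∃ x : K, x ≠ 0 ∧ x ∉ O)
    [S : vfLang.Structure K]
    (h0 : Language.Structure.funMap (L := vfLang) (show vfLang.Functions 0 from VFConst.zero) ![] = (0 : K))
    (h1 : Language.Structure.funMap (L := vfLang) (show vfLang.Functions 0 from VFConst.one) ![] = (1 : K))
    (hneg : ∀ x : K, Language.Structure.funMap (L := vfLang) (show vfLang.Functions 1 from Unit.unit) ![x] = -x)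
    (hadd : ∀ x y : K, Language.Structure.funMap (L := vfLang) (show vfLang.Functions 2 from VFBin.add) ![x, y] = x + y)
    (hmul : ∀ x y : K, Language.Structure.funMap (L := vfLang) (show vfLang.Functions 2 from VFBin.mul) ![x, y] = x * y)
    (hdiv : ∀ x y : K, Language.Structure.RelMap (L := vfLang) (show vfLang.Relations 2 from Unit.unit) ![x, y] ↔
      ∃ t : O, y = (t : K) * x)
    (κ : Cardinal)
    -- strong homogeneity of the monster: tuples with the same type over a
    -- small set are conjugate by an automorphism fixing that set
    (hhomog : ∀ C : Set K, #C < κ → ∀ (n : ℕ) (x y : Fin n → K),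
      EqTpV x y C → ∃ σ : K ≃[vfLang] K, (∀ c ∈ C, σ c = c) ∧ ∀ i, σ (x i) = y i) :
    ∀ C : Set K, #C < κ → ∀ x : K,
      ((x ∈ O ∧ ∀ B : Set K, IsBallO O B → B ⊆ (O : Set K) → B ≠ (O : Set K) →
          {T : Set K | ∃ σ : K ≃[vfLang] K,
            (∀ c ∈ C, σ c = c) ∧ T = σ '' B}.Finite → x ∉ B)
        ↔ (x ∈ O ∧ ¬ {T : Set K | ∃ σ : K ≃[vfLang] K, (∀ c ∈ C, σ c = c) ∧
            T = σ '' {y : K | ∃ t : O,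
              t ∈ IsLocalRing.maximalIdeal O ∧ y = x + (t : K)}}.Finite)) :=
  stmt16_general O (S := S) hadd hmul hdiv κ
end
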